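/- arXiv:quant-ph/0607029 — 6 statements merged into one kernel-verified Lean document; each statement's English description precedes it below -/
import Mathlib

section
/- For every integer d ≥ 3 there exist parameter vectors η, η̃ ∈ ℝ^{d+1}, each satisfying the section constraints and with r(η) = r(η̃) = 1 (so that ρ(η) and ρ(η̃) are pure states), and a vector ξ* ∈ ℝ^{d+1} satisfying the section constraints with r(ξ*) = 1, such that: (a) for every r ∈ (0,1), the vector ξ⁽ʳ⁾ defined by ξ⁽ʳ⁾_1 = (d−2)/2 + r·(ξ*_1 − (d−2)/2), ξ⁽ʳ⁾_2 = (d−2) − ξ⁽ʳ⁾_1, ξ⁽ʳ⁾_j = −1 for 3 ≤ j ≤ d−1, ξ⁽ʳ⁾_d = r·ξ*_d, ξ⁽ʳ⁾_{d+1} = r·ξ*_{d+1} satisfies D(ρ(η)‖ρ(ξ⁽ʳ⁾)) = D(ρ(η̃)‖ρ(ξ⁽ʳ⁾)); yet (b) Σ_{i=1}^{d+1} (η_i − ξ*_i)² ≠ Σ_{i=1}^{d+1} (η̃_i − ξ*_i)². In other words, on the pure-state ellipsoid of the section, the Voronoi bisector with respect to the quantum divergence (obtained as a limit along shrunk ellipsoids)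 and the bisector with respect to the Euclidean distance on the parameters do not coincide. -/
open scoped ComplexOrder

open Matrix Finset in
noncomputable def matLog {n : Type*} [Fintype n] [DecidableEq n]
    (A : Matrix n n ℂ) : Matrix n n ℂ := cfc Real.log A

noncomputable def qDiv {n : Type*} [Fintype n] [DecidableEq n]
    (σ ρ : Matrix n n ℂ) : ℝ := (Matrix.trace (σ * (matLog σ - matLog ρ))).re

noncomputable def rho (d : ℕ) (ξ : ℕ → ℝ) : Matrix (Fin d) (Fin d) ℂ :=
  fun i j =>
    if i = j then
      if (i : ℕ) = d - 1 then (((1 - ∑ k ∈ Finset.Icc 1 (d - 1), ξ k) / d : ℝ) : ℂ)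
      else (((ξ ((i : ℕ) + 1) + 1) / d : ℝ) : ℂ)
    else if (i : ℕ) = 0 ∧ (j : ℕ) = 1 then ((ξ d : ℂ) - Complex.I * (ξ (d + 1) : ℂ)) / 2
    else if (i : ℕ) = 1 ∧ (j : ℕ) = 0 then ((ξ d : ℂ) + Complex.I * (ξ (d + 1) : ℂ)) / 2
    else 0

noncomputable def rParam (d : ℕ) (ξ : ℕ → ℝ) : ℝ :=
  Real.sqrt ((ξ 1 - ξ 2) ^ 2 / (d : ℝ) ^ 2 + ξ d ^ 2 + ξ (d + 1) ^ 2)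

noncomputable def lam1 (d : ℕ) (ξ : ℕ → ℝ) : ℝ :=
  (ξ 1 + ξ 2 + 2) / (2 * d) + rParam d ξ / 2

noncomputable def lam2 (d : ℕ) (ξ : ℕ → ℝ) : ℝ :=
  (ξ 1 + ξ 2 + 2) / (2 * d) - rParam d ξ / 2

def SectionConstraints (d : ℕ) (ξ : ℕ → ℝ) : Prop :=
  ξ 1 + ξ 2 = (d : ℝ) - 2 ∧ ∀ j : ℕ, 3 ≤ j → j ≤ d - 1 → ξ j = -1

open Matrix Complex

noncomputable def pl (d : ℕ) (m : Matrix (Fin 2) (Fin 2) ℂ) : Matrix (Fin d) (Fin d) ℂ :=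
  Matrix.of fun i j => if h : (i : ℕ) < 2 ∧ (j : ℕ) < 2 then m ⟨i, h.1⟩ ⟨j, h.2⟩ else 0

lemma pl_add (d : ℕ) (m m' : Matrix (Fin 2) (Fin 2) ℂ) :
    pl d m + pl d m' = pl d (m + m') := by
  ext i j
  simp only [pl, Matrix.add_apply, Matrix.of_apply]
  split_ifs <;> simp

lemma pl_zero (d : ℕ) : pl d 0 = 0 := by
  ext i j
  simp only [pl, Matrix.of_apply, Matrix.zero_apply]
  split_ifs <;> simp

lemma pl_conjT (d : ℕ) (m : Matrix (Fin 2) (Fin 2) ℂ) : (pl d m)ᴴ = pl d mᴴ := by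
  ext i j
  simp only [pl, Matrix.conjTranspose_apply, Matrix.of_apply]
  split_ifs with h1 h2 h2
  · rfl
  · exact absurd ⟨h1.2, h1.1⟩ h2
  · exact absurd ⟨h2.2, h2.1⟩ h1
  · simp

lemma pl_mul (d : ℕ) (hd : 2 ≤ d) (m m' : Matrix (Fin 2) (Fin 2) ℂ) :
    pl d m * pl d m' = pl d (m * m') := by
  have h0 : (0 : ℕ) < d := by omega
  have h1 : (1 : ℕ) < d := by omega
  ext i j
  rw [Matrix.mul_apply]
  have hvan : ∀ k ∈ Finset.univ, k ∉ ({⟨0, h0⟩, ⟨1, h1⟩} : Finset (Fin d)) →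
      pl d m i k * pl d m' k j = 0 := by
    intro k _ hk
    simp only [Finset.mem_insert, Finset.mem_singleton, Fin.ext_iff] at hk
    push_neg at hk
    have : ¬ ((k : ℕ) < 2) := by omega
    simp [pl, this, show ¬ ((k:ℕ) ≤ 1) by omega]
  rw [← Finset.sum_subset (Finset.subset_univ _) (fun x _ hx => hvan x (Finset.mem_univ x) hx)]
  rw [Finset.sum_pair (by simp [Fin.ext_iff])]
  by_cases hi : (i : ℕ) < 2
  · by_cases hj : (j : ℕ) < 2
    · simp [pl, hi, hj, Matrix.mul_apply, Fin.sum_univ_two, show (i:ℕ) ≤ 1 by omega, show (j:ℕ) ≤ 1 by omega]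
    · simp [pl, hj, show ¬ ((j:ℕ) ≤ 1) by omega]
  · simp [pl, hi, show ¬ ((i:ℕ) ≤ 1) by omega]

noncomputable section AuxRho

open Finset in
lemma sum_icc_one (d : ℕ) (hd : 3 ≤ d) (ξ : ℕ → ℝ) (h12 : ξ 1 + ξ 2 = (d:ℝ) - 2)
    (hmid : ∀ j, 3 ≤ j → j ≤ d - 1 → ξ j = -1) :
    ∑ k ∈ Finset.Icc 1 (d-1), ξ k = 1 := by
  have hset : Finset.Icc 1 (d-1) = insert 1 (insert 2 (Finset.Icc 3 (d-1))) := by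
    ext x; simp only [Finset.mem_Icc, Finset.mem_insert]; omega
  rw [hset, Finset.sum_insert (by simp only [Finset.mem_insert, Finset.mem_Icc]; omega),
    Finset.sum_insert (by simp only [Finset.mem_Icc]; omega)]
  have : ∑ k ∈ Finset.Icc 3 (d-1), ξ k = ∑ k ∈ Finset.Icc 3 (d-1), (-1 : ℝ) :=
    Finset.sum_congr rfl fun x hx => by
      rw [Finset.mem_Icc] at hx; exact hmid x hx.1 hx.2
  rw [this, Finset.sum_const, Nat.card_Icc]
  have h3 : ((d - 1 + 1 - 3 : ℕ) : ℝ) = (d : ℝ) - 3 := by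
    have : (d - 1 + 1 - 3 : ℕ) = d - 3 := by omega
    rw [this, Nat.cast_sub (by omega)]; norm_num
  rw [nsmul_eq_mul, h3]
  linarith

lemma icc_split_sq (d : ℕ) (hd : 3 ≤ d) (f : ℕ → ℝ)
    (h : ∀ j, 3 ≤ j → j ≤ d - 1 → f j = 0) :
    ∑ i ∈ Finset.Icc 1 (d+1), f i = f 1 + f 2 + f d + f (d+1) := by
  have hset : Finset.Icc 1 (d+1) =
      insert 1 (insert 2 (insert d (insert (d+1) (Finset.Icc 3 (d-1))))) := by
    ext x; simp only [Finset.mem_Icc, Finset.mem_insert]; omega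
  rw [hset, Finset.sum_insert (by simp only [Finset.mem_insert, Finset.mem_Icc]; omega),
    Finset.sum_insert (by simp only [Finset.mem_insert, Finset.mem_Icc]; omega),
    Finset.sum_insert (by simp only [Finset.mem_insert, Finset.mem_Icc]; omega),
    Finset.sum_insert (by simp only [Finset.mem_Icc]; omega),
    Finset.sum_eq_zero (fun x hx => by rw [Finset.mem_Icc] at hx; exact h x hx.1 hx.2)]
  ring

lemma rho_eq (d : ℕ) (hd : 3 ≤ d) (ξ : ℕ → ℝ)
    (h12 : ξ 1 + ξ 2 = (d:ℝ) - 2) (hmid : ∀ j, 3 ≤ j → j ≤ d - 1 → ξ j = -1) :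
    rho d ξ = pl d !![(((ξ 1 + 1)/d : ℝ) : ℂ), ((ξ d : ℂ) - Complex.I * (ξ (d+1) : ℂ))/2;
      ((ξ d : ℂ) + Complex.I * (ξ (d+1) : ℂ))/2, (((ξ 2 + 1)/d : ℝ) : ℂ)] := by
  have hsum := sum_icc_one d hd ξ h12 hmid
  ext ⟨i, hi⟩ ⟨j, hj⟩
  obtain hi0 | hi1 | hi2 : i = 0 ∨ i = 1 ∨ 2 ≤ i := by omega
  · subst hi0
    obtain hj0 | hj1 | hj2 : j = 0 ∨ j = 1 ∨ 2 ≤ j := by omega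
    · subst hj0
      simp [rho, pl, show (0:ℕ) ≠ d - 1 by omega]
    · subst hj1
      simp [rho, pl, Fin.ext_iff]
    · have : ¬ ((j:ℕ) < 2) := by omega
      simp [rho, pl, Fin.ext_iff, this, show ¬ (0 = j) by omega, show ¬ (j = 1) by omega, show ¬ (j ≤ 1) by omega]
  · subst hi1
    obtain hj0 | hj1 | hj2 : j = 0 ∨ j = 1 ∨ 2 ≤ j := by omega
    · subst hj0
      simp [rho, pl, Fin.ext_iff]
    · subst hj1
      simp [rho, pl, show (1:ℕ) ≠ d - 1 by omega]
    · have : ¬ ((j:ℕ) < 2) := by omega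
      simp [rho, pl, Fin.ext_iff, this, show ¬ (1 = j) by omega, show ¬ (j = 0) by omega, show ¬ (j ≤ 1) by omega]
  · have hI : ¬ ((i:ℕ) < 2) := by omega
    obtain hij | hij := eq_or_ne i j
    · subst hij
      obtain hlast | hmidd := eq_or_ne i (d-1)
      · simp [rho, pl, hI, hlast, hsum, show ¬ (d - 1 < 2) by omega, show ¬ (d ≤ 2) by omega]
      · have h3 : 3 ≤ i + 1 := by omega
        have h4 : i + 1 ≤ d - 1 := by omega
        simp [rho, pl, hI, hmidd, hmid (i+1) h3 h4, show ¬ (i ≤ 1) by omega]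
    · simp [rho, pl, Fin.ext_iff, hI, hij, show ¬ (i = 0) by omega, show ¬ (i = 1) by omega, show ¬ (i ≤ 1) by omega]

end AuxRho

section Conj

variable {n : Type*} [Fintype n] [DecidableEq n]

noncomputable def conjSAH (U : Matrix n n ℂ) (h : U * Uᴴ = 1) (h' : Uᴴ * U = 1) :
    Matrix n n ℂ →⋆ₐ[ℂ] Matrix n n ℂ where
  toFun A := U * A * Uᴴ
  map_one' := by show U * 1 * Uᴴ = 1; rw [mul_one, h]
  map_mul' A B := by
    show U * (A * B) * Uᴴ = (U * A * Uᴴ) * (U * B * Uᴴ)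
    have : U * (A * B) * Uᴴ = U * A * ((Uᴴ * U) * (B * Uᴴ)) := by
      rw [h', one_mul]; noncomm_ring
    rw [this]; noncomm_ring
  map_zero' := by show U * 0 * Uᴴ = 0; simp
  map_add' A B := by show U * (A + B) * Uᴴ = U * A * Uᴴ + U * B * Uᴴ; noncomm_ring
  commutes' c := by
    show U * (algebraMap ℂ (Matrix n n ℂ) c) * Uᴴ = _
    simp only [Algebra.algebraMap_eq_smul_one, Matrix.mul_smul, Matrix.smul_mul, mul_one, h]
  map_star' A := by
    show U * (star A) * Uᴴ = star (U * A * Uᴴ)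
    simp only [Matrix.star_eq_conjTranspose, Matrix.conjTranspose_mul,
      Matrix.conjTranspose_conjTranspose, Matrix.mul_assoc]

lemma conjSAH_cont (U : Matrix n n ℂ) (h : U * Uᴴ = 1) (h' : Uᴴ * U = 1) :
    Continuous (conjSAH U h h') := by
  show Continuous fun A : Matrix n n ℂ => U * A * Uᴴ
  exact (continuous_const.matrix_mul continuous_id).matrix_mul continuous_const

lemma matLog_conj (U A : Matrix n n ℂ) (h : U * Uᴴ = 1) (h' : Uᴴ * U = 1)
    (hA : _root_.IsSelfAdjoint A) : matLog (U * A * Uᴴ) = U * matLog A * Uᴴ := by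
  have hA' : _root_.IsSelfAdjoint (U * A * Uᴴ) := by
    rw [isSelfAdjoint_iff, Matrix.star_eq_conjTranspose] at hA ⊢
    simp only [Matrix.conjTranspose_mul, Matrix.conjTranspose_conjTranspose, hA,
      Matrix.mul_assoc]
  have hcont : ContinuousOn Real.log (spectrum ℝ A) :=
    Matrix.finite_real_spectrum.continuousOn _
  have := StarAlgHom.map_cfc (conjSAH U h h') Real.log A hcont (conjSAH_cont U h h') hA hA'
  unfold matLog
  calc cfc Real.log (U * A * Uᴴ) = cfc Real.log ((conjSAH U h h') A) := rfl
    _ = (conjSAH U h h') (cfc Real.log A) := this.symm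
    _ = U * cfc Real.log A * Uᴴ := rfl

lemma qDiv_conj (U σ M : Matrix n n ℂ) (h : U * Uᴴ = 1) (h' : Uᴴ * U = 1)
    (hσ : _root_.IsSelfAdjoint σ) (hM : _root_.IsSelfAdjoint M) (hcomm : U * M = M * U) :
    qDiv (U * σ * Uᴴ) M = qDiv σ M := by
  have hMfix : U * M * Uᴴ = M := by rw [hcomm, Matrix.mul_assoc, h, mul_one]
  have hLM : matLog M = U * matLog M * Uᴴ := by rw [← matLog_conj U M h h' hM, hMfix]
  unfold qDiv
  congr 1
  rw [matLog_conj U σ h h' hσ]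
  conv_lhs => rw [hLM]
  have key : ∀ X Y : Matrix n n ℂ, U * X * Uᴴ * (U * Y * Uᴴ) = U * (X * Y) * Uᴴ := by
    intro X Y
    rw [show U * X * Uᴴ * (U * Y * Uᴴ) = U * X * (Uᴴ * U) * (Y * Uᴴ) from by noncomm_ring,
      h', mul_one]
    noncomm_ring
  have : U * σ * Uᴴ * (U * matLog σ * Uᴴ - U * matLog M * Uᴴ)
      = U * (σ * (matLog σ - matLog M)) * Uᴴ := by
    rw [mul_sub, key σ (matLog σ), key σ (matLog M), mul_sub σ, mul_sub U, sub_mul]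
  rw [this, Matrix.trace_mul_cycle, ← Matrix.mul_assoc, h', one_mul]

end Conj

noncomputable def etaP (d : ℕ) : ℕ → ℝ := fun k =>
  if k = d then 0 else if k = d + 1 then 1 else if k = 1 then ((d:ℝ)-2)/2
  else if k = 2 then ((d:ℝ)-2)/2 else -1

noncomputable def etaP' (d : ℕ) : ℕ → ℝ := fun k =>
  if k = d then 0 else if k = d + 1 then 0 else if k = 1 then (d:ℝ)-1 else -1

noncomputable def xiS (d : ℕ) : ℕ → ℝ := fun k =>
  if k = d then 1 else if k = d + 1 then 0 else if k = 1 then ((d:ℝ)-2)/2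
  else if k = 2 then ((d:ℝ)-2)/2 else -1

section Evals
variable {d : ℕ} (hd : 3 ≤ d)
include hd

lemma etaP_1 : etaP d 1 = ((d:ℝ)-2)/2 := by
  simp only [etaP]; rw [if_neg (by omega), if_neg (by omega)]; simp
lemma etaP_2 : etaP d 2 = ((d:ℝ)-2)/2 := by
  simp only [etaP]; rw [if_neg (by omega), if_neg (by omega), if_neg (by omega)]; simp
lemma etaP_d : etaP d d = 0 := by simp only [etaP]; simp
lemma etaP_d1 : etaP d (d+1) = 1 := by
  simp only [etaP]; rw [if_neg (by omega)]; simp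
lemma etaP_mid : ∀ j, 3 ≤ j → j ≤ d - 1 → etaP d j = -1 := by
  intro j h3 h4; simp only [etaP]
  rw [if_neg (by omega), if_neg (by omega), if_neg (by omega), if_neg (by omega)]

lemma etaP'_1 : etaP' d 1 = (d:ℝ)-1 := by
  simp only [etaP']; rw [if_neg (by omega), if_neg (by omega)]; simp
lemma etaP'_2 : etaP' d 2 = -1 := by
  simp only [etaP']; rw [if_neg (by omega), if_neg (by omega), if_neg (by omega)]
lemma etaP'_d : etaP' d d = 0 := by simp only [etaP']; simp
lemma etaP'_d1 : etaP' d (d+1) = 0 := by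
  simp only [etaP']; rw [if_neg (by omega)]; simp
lemma etaP'_mid : ∀ j, 3 ≤ j → j ≤ d - 1 → etaP' d j = -1 := by
  intro j h3 h4; simp only [etaP']
  rw [if_neg (by omega), if_neg (by omega), if_neg (by omega)]

lemma xiS_1 : xiS d 1 = ((d:ℝ)-2)/2 := by
  simp only [xiS]; rw [if_neg (by omega), if_neg (by omega)]; simp
lemma xiS_2 : xiS d 2 = ((d:ℝ)-2)/2 := by
  simp only [xiS]; rw [if_neg (by omega), if_neg (by omega), if_neg (by omega)]; simp
lemma xiS_d : xiS d d = 1 := by simp only [xiS]; simp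
lemma xiS_d1 : xiS d (d+1) = 0 := by
  simp only [xiS]; rw [if_neg (by omega)]; simp
lemma xiS_mid : ∀ j, 3 ≤ j → j ≤ d - 1 → xiS d j = -1 := by
  intro j h3 h4; simp only [xiS]
  rw [if_neg (by omega), if_neg (by omega), if_neg (by omega), if_neg (by omega)]

end Evals

namespace Vor

open Complex

noncomputable def pB : Matrix (Fin 2) (Fin 2) ℂ := !![(1/2 : ℂ), -I/2; I/2, 1/2]
noncomputable def pB' : Matrix (Fin 2) (Fin 2) ℂ := !![(1 : ℂ), 0; 0, 0]
noncomputable def vB : Matrix (Fin 2) (Fin 2) ℂ :=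
  !![((-1+I)/2 : ℂ), (1-I)/2; (1-I)/2, (-1+I)/2]
noncomputable def qB (r : ℝ) : Matrix (Fin 2) (Fin 2) ℂ := !![(1/2 : ℂ), (r:ℂ)/2; (r:ℂ)/2, 1/2]

set_option maxHeartbeats 1000000 in
lemma vB_conjT : vBᴴ = !![((-1-I)/2 : ℂ), (1+I)/2; (1+I)/2, (-1-I)/2] := by
  ext i j
  fin_cases i <;> fin_cases j <;>
    simp [vB, Matrix.conjTranspose_apply, Complex.ext_iff]

set_option maxHeartbeats 1000000 in
lemma idA : vB + vBᴴ + vB * vBᴴ = 0 := by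
  rw [vB_conjT]
  ext i j
  fin_cases i <;> fin_cases j <;>
    · simp [vB, Matrix.mul_apply, Fin.sum_univ_two]
      ring_nf
      simp [Complex.I_sq]
      try ring_nf

set_option maxHeartbeats 1000000 in
lemma idB : vBᴴ + vB + vBᴴ * vB = 0 := by
  rw [vB_conjT]
  ext i j
  fin_cases i <;> fin_cases j <;>
    · simp [vB, Matrix.mul_apply, Fin.sum_univ_two]
      ring_nf
      simp [Complex.I_sq]
      try ring_nf

set_option maxHeartbeats 1000000 in
lemma idC : pB + vB * pB + pB * vBᴴ + vB * pB * vBᴴ = pB' := by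
  rw [vB_conjT]
  ext i j
  fin_cases i <;> fin_cases j <;>
    · simp [vB, pB, pB', Matrix.mul_apply, Fin.sum_univ_two]
      ring_nf
      simp [Complex.I_sq]
      try ring_nf

set_option maxHeartbeats 1000000 in
lemma idD (r : ℝ) : vB * qB r = qB r * vB := by
  ext i j
  fin_cases i <;> fin_cases j <;>
    · simp [vB, qB, Matrix.mul_apply, Fin.sum_univ_two]
      ring

lemma idP : pBᴴ = pB := by
  ext i j
  fin_cases i <;> fin_cases j <;> simp [pB, Matrix.conjTranspose_apply, Complex.ext_iff]

lemma idQ (r : ℝ) : (qB r)ᴴ = qB r := by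
  ext i j
  fin_cases i <;> fin_cases j <;> simp [qB, Matrix.conjTranspose_apply, Complex.ext_iff]

end Vor

theorem voronoi_diagrams_differ_in_higher_dimension :
    ∀ d : ℕ, 3 ≤ d →
      ∃ η η' ξs : ℕ → ℝ,
        SectionConstraints d η ∧ rParam d η = 1 ∧
        SectionConstraints d η' ∧ rParam d η' = 1 ∧
        SectionConstraints d ξs ∧ rParam d ξs = 1 ∧
        (∀ r : ℝ, 0 < r → r < 1 →
          ∀ ξ : ℕ → ℝ,
            ξ 1 = ((d : ℝ) - 2) / 2 + r * (ξs 1 - ((d : ℝ) - 2) / 2) →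
            ξ 2 = ((d : ℝ) - 2) - ξ 1 →
            (∀ j : ℕ, 3 ≤ j → j ≤ d - 1 → ξ j = -1) →
            ξ d = r * ξs d → ξ (d + 1) = r * ξs (d + 1) →
            qDiv (rho d η) (rho d ξ) = qDiv (rho d η') (rho d ξ)) ∧
        ∑ i ∈ Finset.Icc 1 (d + 1), (η i - ξs i) ^ 2 ≠
          ∑ i ∈ Finset.Icc 1 (d + 1), (η' i - ξs i) ^ 2 := by
  intro d hd
  have hd2 : 2 ≤ d := by omega
  have hdR : (d : ℝ) ≠ 0 := Nat.cast_ne_zero.mpr (by omega)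
  refine ⟨etaP d, etaP' d, xiS d, ⟨by rw [etaP_1 hd, etaP_2 hd]; ring, etaP_mid hd⟩, ?_,
    ⟨by rw [etaP'_1 hd, etaP'_2 hd]; ring, etaP'_mid hd⟩, ?_,
    ⟨by rw [xiS_1 hd, xiS_2 hd]; ring, xiS_mid hd⟩, ?_, ?_, ?_⟩
  · unfold rParam
    rw [etaP_1 hd, etaP_2 hd, etaP_d hd, etaP_d1 hd]
    norm_num
  · unfold rParam
    rw [etaP'_1 hd, etaP'_2 hd, etaP'_d hd, etaP'_d1 hd]
    have : ((d:ℝ) - 1 - (-1)) ^ 2 / (d:ℝ) ^ 2 + 0 ^ 2 + 0 ^ 2 = 1 := by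
      field_simp
      ring
    rw [this, Real.sqrt_one]
  · unfold rParam
    rw [xiS_1 hd, xiS_2 hd, xiS_d hd, xiS_d1 hd]
    norm_num
  · intro r hr0 hr1 ξ hx1 hx2 hxmid hxd hxd1
    have hξ1 : ξ 1 = ((d:ℝ) - 2) / 2 := by rw [hx1, xiS_1 hd]; ring
    have hξ2 : ξ 2 = ((d:ℝ) - 2) / 2 := by rw [hx2, hξ1]; ring
    have hξd : ξ d = r := by rw [hxd, xiS_d hd, mul_one]
    have hξd1 : ξ (d + 1) = 0 := by rw [hxd1, xiS_d1 hd, mul_zero]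
    have h12ξ : ξ 1 + ξ 2 = (d:ℝ) - 2 := by rw [hξ1, hξ2]; ring
    have hhalf : ((((d:ℝ) - 2) / 2 + 1) / d : ℝ) = 1 / 2 := by field_simp; ring
    have hρη : rho d (etaP d) = pl d Vor.pB := by
      rw [rho_eq d hd _ (by rw [etaP_1 hd, etaP_2 hd]; ring) (etaP_mid hd)]
      refine congrArg (pl d) ?_
      rw [etaP_1 hd, etaP_2 hd, etaP_d hd, etaP_d1 hd, hhalf]
      ext i j
      fin_cases i <;> fin_cases j <;> simp [Vor.pB] <;> push_cast <;> ring
    have hρη' : rho d (etaP' d) = pl d Vor.pB' := by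
      rw [rho_eq d hd _ (by rw [etaP'_1 hd, etaP'_2 hd]; ring) (etaP'_mid hd)]
      refine congrArg (pl d) ?_
      rw [etaP'_1 hd, etaP'_2 hd, etaP'_d hd, etaP'_d1 hd]
      have h1 : (((d:ℝ) - 1 + 1) / d : ℝ) = 1 := by field_simp; ring
      have h0 : (((-1:ℝ) + 1) / d : ℝ) = 0 := by norm_num
      rw [h1, h0]
      ext i j
      fin_cases i <;> fin_cases j <;> simp [Vor.pB'] <;> push_cast <;> ring
    have hρξ : rho d ξ = pl d (Vor.qB r) := by
      rw [rho_eq d hd _ h12ξ hxmid]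
      refine congrArg (pl d) ?_
      rw [hξ1, hξ2, hξd, hξd1, hhalf]
      ext i j
      fin_cases i <;> fin_cases j <;> simp [Vor.qB] <;> push_cast <;> ring
    have expand2 : ∀ a b : Matrix (Fin d) (Fin d) ℂ,
        (1 + a) * (1 + b) = 1 + (a + b + a * b) := fun a b => by noncomm_ring
    have hU1 : (1 + pl d Vor.vB) * (1 + pl d Vor.vB)ᴴ = 1 := by
      rw [Matrix.conjTranspose_add, Matrix.conjTranspose_one, pl_conjT, expand2,
        pl_mul d hd2, pl_add, pl_add, Vor.idA, pl_zero, add_zero]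
    have hU2 : (1 + pl d Vor.vB)ᴴ * (1 + pl d Vor.vB) = 1 := by
      rw [Matrix.conjTranspose_add, Matrix.conjTranspose_one, pl_conjT, expand2,
        pl_mul d hd2, pl_add, pl_add, Vor.idB, pl_zero, add_zero]
    have expand3 : ∀ a m b : Matrix (Fin d) (Fin d) ℂ,
        (1 + a) * m * (1 + b) = m + a * m + m * b + a * m * b := fun a m b => by noncomm_ring
    have hconj : (1 + pl d Vor.vB) * rho d (etaP d) * (1 + pl d Vor.vB)ᴴ = rho d (etaP' d) := by
      rw [hρη, hρη', Matrix.conjTranspose_add, Matrix.conjTranspose_one, pl_conjT, expand3,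
        pl_mul d hd2, pl_mul d hd2, pl_mul d hd2, pl_add, pl_add, pl_add, Vor.idC]
    have hcommU : (1 + pl d Vor.vB) * rho d ξ = rho d ξ * (1 + pl d Vor.vB) := by
      rw [hρξ, add_mul, mul_add, one_mul, mul_one, pl_mul d hd2, pl_mul d hd2, Vor.idD]
    have hsσ : _root_.IsSelfAdjoint (rho d (etaP d)) := by
      rw [hρη, isSelfAdjoint_iff, Matrix.star_eq_conjTranspose, pl_conjT, Vor.idP]
    have hsM : _root_.IsSelfAdjoint (rho d ξ) := by
      rw [hρξ, isSelfAdjoint_iff, Matrix.star_eq_conjTranspose, pl_conjT, Vor.idQ]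
    calc qDiv (rho d (etaP d)) (rho d ξ)
        = qDiv ((1 + pl d Vor.vB) * rho d (etaP d) * (1 + pl d Vor.vB)ᴴ) (rho d ξ) :=
          (qDiv_conj _ _ _ hU1 hU2 hsσ hsM hcommU).symm
      _ = qDiv (rho d (etaP' d)) (rho d ξ) := by rw [hconj]
  · rw [icc_split_sq d hd _
        (fun j h3 h4 => by rw [etaP_mid hd j h3 h4, xiS_mid hd j h3 h4]; ring),
      icc_split_sq d hd _
        (fun j h3 h4 => by rw [etaP'_mid hd j h3 h4, xiS_mid hd j h3 h4]; ring)]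
    rw [etaP_1 hd, etaP_2 hd, etaP_d hd, etaP_d1 hd, etaP'_1 hd, etaP'_2 hd, etaP'_d hd,
      etaP'_d1 hd, xiS_1 hd, xiS_2 hd, xiS_d hd, xiS_d1 hd]
    intro heq
    have hdR3 : (3:ℝ) ≤ (d:ℝ) := by exact_mod_cast hd
    nlinarith [heq, hdR3]
end

section
/- Let d ≥ 3, and for ξ ∈ ℝ^{d+1} satisfying the section constraints define the sphere coordinates s(ξ) = ((2ξ_1−(d−2))/d, ξ_d, ξ_{d+1}) ∈ ℝ³, so that ‖s(ξ)‖ = r(ξ). Suppose η, η̃ satisfy the section constraints with ‖s(η)‖ = ‖s(η̃)‖ = 1 (so ρ(η), ρ(η̃) are pure states), and ξ satisfies the section constraints with 0 < ‖s(ξ)‖ < 1. Then D(ρ(η)‖ρ(ξ)) = D(ρ(η̃)‖ρ(ξ)) if and only if ⟨s(ξ), s(η) − s(η̃)⟩ = 0. That is, after the linear change of coordinates mapping the pure-state ellipsoid of the section onto the unit sphere, the Voronoi bisector with respect to the quantum divergence coincides with the geodesic (great-circle) bisector on the sphere. -/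
open scoped ComplexOrder

noncomputable def sCoord (d : ℕ) (ξ : ℕ → ℝ) : EuclideanSpace ℝ (Fin 3) :=
  (WithLp.equiv 2 (Fin 3 → ℝ)).symm ![(2 * ξ 1 - ((d : ℝ) - 2)) / d, ξ d, ξ (d + 1)]

namespace Bisector

/-- index 0 -/
def z (d : ℕ) (hd : 3 ≤ d) : Fin d := ⟨0, by omega⟩
/-- index 1 -/
def o (d : ℕ) (hd : 3 ≤ d) : Fin d := ⟨1, by omega⟩

/-- supported on the top-left 2×2 block -/
def Blk (d : ℕ) (M : Matrix (Fin d) (Fin d) ℂ) : Prop :=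
  ∀ i j : Fin d, 2 ≤ (i : ℕ) ∨ 2 ≤ (j : ℕ) → M i j = 0

variable {d : ℕ}

lemma sum_fin_eq (hd : 3 ≤ d) (f : Fin d → ℂ) (hf : ∀ k : Fin d, 2 ≤ (k : ℕ) → f k = 0) :
    ∑ k, f k = f (z d hd) + f (o d hd) := by
  rw [← Finset.sum_subset (Finset.subset_univ {z d hd, o d hd}), Finset.sum_pair]
  · simp [z, o, Fin.ext_iff]
  · intro k _ hk
    apply hf
    simp only [Finset.mem_insert, Finset.mem_singleton, z, o, Fin.ext_iff, not_or] at hk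
    omega

lemma mul_apply_blk (hd : 3 ≤ d) {M N : Matrix (Fin d) (Fin d) ℂ} (hN : Blk d N) (i j : Fin d) :
    (M * N) i j = M i (z d hd) * N (z d hd) j + M i (o d hd) * N (o d hd) j := by
  rw [Matrix.mul_apply]
  exact sum_fin_eq hd _ fun k hk => by rw [hN k j (Or.inl hk), mul_zero]

lemma blk_mul (hd : 3 ≤ d) {M N : Matrix (Fin d) (Fin d) ℂ} (hM : Blk d M) (hN : Blk d N) :
    Blk d (M * N) := by
  intro i j h
  rw [mul_apply_blk hd hN]
  rcases h with h | h
  · rw [hM i _ (Or.inl h), hM i _ (Or.inl h), zero_mul, zero_mul, add_zero]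
  · rw [hN _ j (Or.inr h), hN _ j (Or.inr h), mul_zero, mul_zero, add_zero]

lemma trace_blk (hd : 3 ≤ d) {M : Matrix (Fin d) (Fin d) ℂ} (hM : Blk d M) :
    Matrix.trace M = M (z d hd) (z d hd) + M (o d hd) (o d hd) := by
  rw [Matrix.trace]
  exact sum_fin_eq hd _ fun k hk => hM k k (Or.inl hk)

lemma sum_Icc_eq_one (hd : 3 ≤ d) {ξ : ℕ → ℝ} (hξ : SectionConstraints d ξ) :
    ∑ k ∈ Finset.Icc 1 (d - 1), ξ k = 1 := by
  have h1 : Finset.Icc 1 (d - 1) = insert 1 (insert 2 (Finset.Icc 3 (d - 1))) := by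
    ext k; simp only [Finset.mem_Icc, Finset.mem_insert]; omega
  rw [h1, Finset.sum_insert (by simp only [Finset.mem_insert, Finset.mem_Icc]; omega),
    Finset.sum_insert (by simp only [Finset.mem_Icc]; omega)]
  have h2 : ∑ k ∈ Finset.Icc 3 (d - 1), ξ k = ∑ _k ∈ Finset.Icc 3 (d - 1), (-1 : ℝ) :=
    Finset.sum_congr rfl fun k hk => by
      rw [Finset.mem_Icc] at hk; exact hξ.2 k hk.1 hk.2
  rw [h2, Finset.sum_const, Nat.card_Icc]
  have h3 : ((d - 1 + 1 - 3 : ℕ) : ℝ) = (d : ℝ) - 3 := by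
    have : d - 1 + 1 - 3 = d - 3 := by omega
    rw [this]
    push_cast [Nat.cast_sub (by omega : 3 ≤ d)]
    ring
  rw [nsmul_eq_mul, h3]
  have := hξ.1
  linarith

lemma rho_blk (hd : 3 ≤ d) {ξ : ℕ → ℝ} (hξ : SectionConstraints d ξ) : Blk d (rho d ξ) := by
  intro i j h
  unfold rho
  split_ifs with h1 h2 h3 h4
  · rw [sum_Icc_eq_one hd hξ]
    simp
  · subst h1
    have hi2 : 2 ≤ (i : ℕ) := by omega
    have hilt : (i : ℕ) < d := i.isLt
    rw [hξ.2 _ (by omega) (by omega)]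
    simp
  · exact absurd h (by omega)
  · exact absurd h (by omega)
  · rfl

lemma rho_zz (hd : 3 ≤ d) (ξ : ℕ → ℝ) :
    rho d ξ (z d hd) (z d hd) = (((ξ 1 + 1) / d : ℝ) : ℂ) := by
  have h : ¬ ((0 : ℕ) = d - 1) := by omega
  simp [rho, z, h]

lemma rho_oo (hd : 3 ≤ d) (ξ : ℕ → ℝ) :
    rho d ξ (o d hd) (o d hd) = (((ξ 2 + 1) / d : ℝ) : ℂ) := by
  have h : ¬ ((1 : ℕ) = d - 1) := by omega
  simp [rho, o, h]

lemma rho_zo (hd : 3 ≤ d) (ξ : ℕ → ℝ) :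
    rho d ξ (z d hd) (o d hd) = ((ξ d : ℂ) - Complex.I * (ξ (d + 1) : ℂ)) / 2 := by
  have h : z d hd ≠ o d hd := by simp [z, o, Fin.ext_iff]
  simp [rho, h, z, o]

lemma rho_oz (hd : 3 ≤ d) (ξ : ℕ → ℝ) :
    rho d ξ (o d hd) (z d hd) = ((ξ d : ℂ) + Complex.I * (ξ (d + 1) : ℂ)) / 2 := by
  have h : o d hd ≠ z d hd := by simp [z, o, Fin.ext_iff]
  simp [rho, h, z, o]

lemma rho_sa (ξ : ℕ → ℝ) : IsSelfAdjoint (rho d ξ) := by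
  show star _ = _
  rw [Matrix.star_eq_conjTranspose]
  ext i j
  rw [Matrix.conjTranspose_apply]
  unfold rho
  rcases eq_or_ne i j with rfl | hij
  · simp only [if_pos rfl]
    split_ifs <;> simp [Complex.conj_ofReal]
  · rw [if_neg hij, if_neg (Ne.symm hij)]
    by_cases h01 : (i : ℕ) = 0 ∧ (j : ℕ) = 1
    · rw [if_neg (by omega), if_pos ⟨h01.2, h01.1⟩, if_pos h01]
      simp [Complex.ext_iff]
    · rw [if_neg h01]
      by_cases h10 : (i : ℕ) = 1 ∧ (j : ℕ) = 0
      · rw [if_pos ⟨h10.2, h10.1⟩, if_pos h10]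
        simp [Complex.ext_iff]
      · rw [if_neg (fun hc => h10 ⟨hc.2, hc.1⟩),
          if_neg (fun hc => h01 ⟨hc.2, hc.1⟩), if_neg h10, star_zero]


def blkE (d : ℕ) : Matrix (Fin d) (Fin d) ℂ :=
  fun i j => if i = j ∧ (i : ℕ) < 2 then 1 else 0

lemma blkE_blk : Blk d (blkE d) := by
  intro i j h
  unfold blkE
  rw [if_neg]
  rintro ⟨rfl, h2⟩
  omega

lemma blkE_zz (hd : 3 ≤ d) : blkE d (z d hd) (z d hd) = 1 := if_pos ⟨rfl, by simp [z]⟩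
lemma blkE_oo (hd : 3 ≤ d) : blkE d (o d hd) (o d hd) = 1 := if_pos ⟨rfl, by simp [o]⟩
lemma blkE_zo (hd : 3 ≤ d) : blkE d (z d hd) (o d hd) = 0 :=
  if_neg (by simp [z, o, Fin.ext_iff])
lemma blkE_oz (hd : 3 ≤ d) : blkE d (o d hd) (z d hd) = 0 :=
  if_neg (by simp [z, o, Fin.ext_iff])

lemma eq_z_or_o (hd : 3 ≤ d) (i : Fin d) (h : (i : ℕ) < 2) :
    i = z d hd ∨ i = o d hd := by
  simp only [z, o, Fin.ext_iff]
  omega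

lemma mul_blkE (hd : 3 ≤ d) {M : Matrix (Fin d) (Fin d) ℂ} (hM : Blk d M) :
    M * blkE d = M := by
  ext i j
  rw [mul_apply_blk hd blkE_blk]
  by_cases hj : 2 ≤ (j : ℕ)
  · rw [hM i j (Or.inr hj), blkE_blk _ j (Or.inr hj), blkE_blk _ j (Or.inr hj)]
    ring
  · rcases eq_z_or_o hd j (by omega) with rfl | rfl
    · rw [blkE_zz hd, blkE_oz hd]; ring
    · rw [blkE_zo hd, blkE_oo hd]; ring

lemma blkE_mul (hd : 3 ≤ d) {M : Matrix (Fin d) (Fin d) ℂ} (hM : Blk d M) :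
    blkE d * M = M := by
  ext i j
  rw [mul_apply_blk hd hM]
  by_cases hi : 2 ≤ (i : ℕ)
  · rw [hM i j (Or.inl hi), blkE_blk i _ (Or.inl hi), blkE_blk i _ (Or.inl hi)]
    ring
  · rcases eq_z_or_o hd i (by omega) with rfl | rfl
    · rw [blkE_zz hd, blkE_zo hd]; ring
    · rw [blkE_oz hd, blkE_oo hd]; ring

lemma rho_idem (hd : 3 ≤ d) {η : ℕ → ℝ} (hη : SectionConstraints d η)
    (hpure : (η 1 - η 2) ^ 2 / (d : ℝ) ^ 2 + η d ^ 2 + η (d + 1) ^ 2 = 1) :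
    rho d η * rho d η = rho d η := by
  have hd0 : (d : ℝ) ≠ 0 := by positivity
  have hab : (η 1 + 1) / (d : ℝ) + (η 2 + 1) / (d : ℝ) = 1 := by
    field_simp
    linarith [hη.1]
  have hpure' : (η 1 - η 2) ^ 2 + (η d ^ 2 + η (d + 1) ^ 2) * (d : ℝ) ^ 2 = (d : ℝ) ^ 2 := by
    field_simp at hpure
    linarith
  have hpq : η d ^ 2 + η (d + 1) ^ 2
      = 4 * ((η 1 + 1) / (d : ℝ)) * ((η 2 + 1) / (d : ℝ)) := by
    field_simp
    linear_combination hpure' - ((d : ℝ) + η 1 + η 2 + 2) * hη.1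
  have habC := congrArg Complex.ofReal hab
  have hpqC := congrArg Complex.ofReal hpq
  push_cast at habC hpqC
  have hB := rho_blk hd hη
  ext i j
  by_cases hbig : 2 ≤ (i : ℕ) ∨ 2 ≤ (j : ℕ)
  · rw [blk_mul hd hB hB i j hbig, hB i j hbig]
  · push_neg at hbig
    rcases eq_z_or_o hd i hbig.1 with rfl | rfl <;>
      rcases eq_z_or_o hd j hbig.2 with rfl | rfl <;>
        rw [mul_apply_blk hd hB]
    · rw [rho_zz hd, rho_zo hd, rho_oz hd]
      push_cast
      linear_combination (-(η (d+1) : ℂ) ^ 2 / 4) * Complex.I_sq + (1/4) * hpqC +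
        (((η 1 : ℂ) + 1) / (d : ℂ)) * habC
    · rw [rho_zz hd, rho_zo hd, rho_oo hd]
      push_cast
      linear_combination (((η d : ℂ) - Complex.I * (η (d+1) : ℂ)) / 2) * habC
    · rw [rho_oz hd, rho_zz hd, rho_oo hd]
      push_cast
      linear_combination (((η d : ℂ) + Complex.I * (η (d+1) : ℂ)) / 2) * habC
    · rw [rho_oz hd, rho_zo hd, rho_oo hd]
      push_cast
      linear_combination (-(η (d+1) : ℂ) ^ 2 / 4) * Complex.I_sq + (1/4) * hpqC +
        (((η 2 : ℂ) + 1) / (d : ℂ)) * habC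

lemma lam_mul (hd : 3 ≤ d) (ξ : ℕ → ℝ) :
    lam1 d ξ * lam2 d ξ
      = ((ξ 1 + 1) / (d : ℝ)) * ((ξ 2 + 1) / (d : ℝ)) - (ξ d ^ 2 + ξ (d + 1) ^ 2) / 4 := by
  have hr2 : rParam d ξ ^ 2 = (ξ 1 - ξ 2) ^ 2 / (d : ℝ) ^ 2 + ξ d ^ 2 + ξ (d + 1) ^ 2 :=
    Real.sq_sqrt (by positivity)
  rw [lam1, lam2]
  linear_combination (-1/4 : ℝ) * hr2

lemma rho_quad (hd : 3 ≤ d) {ξ : ℕ → ℝ} (hξ : SectionConstraints d ξ) :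
    rho d ξ * rho d ξ = rho d ξ - (lam1 d ξ * lam2 d ξ) • blkE d := by
  have hd0 : (d : ℝ) ≠ 0 := by positivity
  have hxy : (ξ 1 + 1) / (d : ℝ) + (ξ 2 + 1) / (d : ℝ) = 1 := by
    field_simp
    linarith [hξ.1]
  have hxyC := congrArg Complex.ofReal hxy
  push_cast at hxyC
  have hB := rho_blk hd hξ
  rw [lam_mul hd]
  ext i j
  rw [Matrix.sub_apply, Matrix.smul_apply]
  by_cases hbig : 2 ≤ (i : ℕ) ∨ 2 ≤ (j : ℕ)
  · rw [blk_mul hd hB hB i j hbig, hB i j hbig, blkE_blk i j hbig]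
    simp
  · push_neg at hbig
    rcases eq_z_or_o hd i hbig.1 with rfl | rfl <;>
      rcases eq_z_or_o hd j hbig.2 with rfl | rfl <;>
        rw [mul_apply_blk hd hB]
    · rw [rho_zz hd, rho_zo hd, rho_oz hd, blkE_zz hd, Complex.real_smul, mul_one]
      push_cast
      linear_combination (-(ξ (d+1) : ℂ) ^ 2 / 4) * Complex.I_sq +
        (((ξ 1 : ℂ) + 1) / (d : ℂ)) * hxyC
    · rw [rho_zz hd, rho_zo hd, rho_oo hd, blkE_zo hd, smul_zero, sub_zero]
      push_cast
      linear_combination (((ξ d : ℂ) - Complex.I * (ξ (d+1) : ℂ)) / 2) * hxyC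
    · rw [rho_oz hd, rho_zz hd, rho_oo hd, blkE_oz hd, smul_zero, sub_zero]
      push_cast
      linear_combination (((ξ d : ℂ) + Complex.I * (ξ (d+1) : ℂ)) / 2) * hxyC
    · rw [rho_oz hd, rho_zo hd, rho_oo hd, blkE_oo hd, Complex.real_smul, mul_one]
      push_cast
      linear_combination (-(ξ (d+1) : ℂ) ^ 2 / 4) * Complex.I_sq +
        (((ξ 2 : ℂ) + 1) / (d : ℂ)) * hxyC

open Polynomial in
lemma matLog_idem {n : Type*} [Fintype n] [DecidableEq n] [Nonempty n] {σ : Matrix n n ℂ}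
    (hsa : IsSelfAdjoint σ) (hidem : σ * σ = σ) : matLog σ = 0 := by
  have hspec : ∀ μ ∈ spectrum ℝ σ, μ = 0 ∨ μ = 1 := by
    intro μ hμ
    have hp : (Polynomial.aeval σ) (X ^ 2 - X : ℝ[X]) = 0 := by
      simp only [map_sub, aeval_X_pow, aeval_X]
      rw [sq, hidem, sub_self]
    have h0 : Polynomial.eval μ (X ^ 2 - X : ℝ[X]) ∈
        spectrum ℝ ((Polynomial.aeval σ) (X ^ 2 - X : ℝ[X])) :=
      spectrum.subset_polynomial_aeval σ _ ⟨μ, hμ, rfl⟩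
    rw [hp, spectrum.zero_eq] at h0
    simp only [Polynomial.eval_sub, Polynomial.eval_pow, Polynomial.eval_X,
      Set.mem_singleton_iff] at h0
    rcases mul_eq_zero.1 (show μ * (μ - 1) = 0 by linear_combination h0) with h | h
    · exact Or.inl h
    · exact Or.inr (by linarith [sub_eq_zero.1 h])
  have hEq : (spectrum ℝ σ).EqOn Real.log (fun _ => (0 : ℝ)) := by
    intro μ hμ
    rcases hspec μ hμ with rfl | rfl <;> simp
  rw [matLog, cfc_congr hEq]
  exact cfc_zero ℝ σ

noncomputable def coefA (d : ℕ) (ξ : ℕ → ℝ) : ℝ :=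
  (Real.log (lam1 d ξ) / lam1 d ξ - Real.log (lam2 d ξ) / lam2 d ξ) / (lam1 d ξ - lam2 d ξ)

noncomputable def coefB (d : ℕ) (ξ : ℕ → ℝ) : ℝ :=
  Real.log (lam1 d ξ) / lam1 d ξ - coefA d ξ * lam1 d ξ

lemma lam1_eq (hd : 3 ≤ d) {ξ : ℕ → ℝ} (hξ : SectionConstraints d ξ) :
    lam1 d ξ = 1 / 2 + rParam d ξ / 2 := by
  have hd0 : (d : ℝ) ≠ 0 := by positivity
  rw [lam1, hξ.1]
  field_simp
  ring

lemma lam2_eq (hd : 3 ≤ d) {ξ : ℕ → ℝ} (hξ : SectionConstraints d ξ) :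
    lam2 d ξ = 1 / 2 - rParam d ξ / 2 := by
  have hd0 : (d : ℝ) ≠ 0 := by positivity
  rw [lam2, hξ.1]
  field_simp
  ring

open Polynomial in
lemma matLog_rho (hd : 3 ≤ d) {ξ : ℕ → ℝ} (hξ : SectionConstraints d ξ)
    (hr0 : 0 < rParam d ξ) (hr1 : rParam d ξ < 1) :
    matLog (rho d ξ) = coefA d ξ • (rho d ξ * rho d ξ) + coefB d ξ • rho d ξ := by
  haveI : NeZero d := ⟨by omega⟩
  set A := rho d ξ with hA
  set l1 := lam1 d ξ with hl1
  set l2 := lam2 d ξ with hl2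
  have hl1e : l1 = 1 / 2 + rParam d ξ / 2 := lam1_eq hd hξ
  have hl2e : l2 = 1 / 2 - rParam d ξ / 2 := lam2_eq hd hξ
  have hl1pos : 0 < l1 := by rw [hl1e]; linarith
  have hl2pos : 0 < l2 := by rw [hl2e]; linarith
  have hne : l1 ≠ l2 := by rw [hl1e, hl2e]; intro h; linarith
  have hsum : l1 + l2 = 1 := by rw [hl1e, hl2e]; ring
  have hBA := rho_blk hd hξ
  have hA3 : A * A * A = A * A - (l1 * l2) • A := by
    conv_lhs => rw [rho_quad hd hξ]
    rw [Matrix.sub_mul, Matrix.smul_mul, blkE_mul hd hBA]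
  have hpa : (Polynomial.aeval A) (X ^ 3 - X ^ 2 + (l1 * l2) • X : ℝ[X]) = 0 := by
    simp only [map_add, map_sub, map_smul, aeval_X_pow, aeval_X]
    rw [show (3 : ℕ) = 2 + 1 from rfl, pow_succ, pow_two, hA3]
    abel
  have hspec : ∀ μ ∈ spectrum ℝ A, μ = 0 ∨ μ = l1 ∨ μ = l2 := by
    intro μ hμ
    have h0 : Polynomial.eval μ (X ^ 3 - X ^ 2 + (l1 * l2) • X : ℝ[X]) ∈
        spectrum ℝ ((Polynomial.aeval A) (X ^ 3 - X ^ 2 + (l1 * l2) • X : ℝ[X])) :=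
      spectrum.subset_polynomial_aeval A _ ⟨μ, hμ, rfl⟩
    rw [hpa, spectrum.zero_eq] at h0
    simp only [Polynomial.eval_add, Polynomial.eval_sub, Polynomial.eval_pow,
      Polynomial.eval_smul, Polynomial.eval_X, smul_eq_mul,
      Set.mem_singleton_iff] at h0
    have hf : μ * ((μ - l1) * (μ - l2)) = 0 := by linear_combination h0 - μ ^ 2 * hsum
    rcases mul_eq_zero.1 hf with h | h
    · exact Or.inl h
    · rcases mul_eq_zero.1 h with h | h
      · exact Or.inr (Or.inl (sub_eq_zero.1 h))
      · exact Or.inr (Or.inr (sub_eq_zero.1 h))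
  have hEq : (spectrum ℝ A).EqOn Real.log
      (fun μ => coefA d ξ * μ ^ 2 + coefB d ξ * μ) := by
    intro μ hμ
    rcases hspec μ hμ with rfl | rfl | rfl
    · simp
    · show Real.log l1 = coefA d ξ * l1 ^ 2 + coefB d ξ * l1
      rw [coefB, ← hl1]
      field_simp
      ring
    · show Real.log l2 = coefA d ξ * l2 ^ 2 + coefB d ξ * l2
      rw [coefB, coefA, ← hl1, ← hl2]
      have h12 : l1 - l2 ≠ 0 := sub_ne_zero.2 hne
      field_simp
      ring
  rw [matLog, cfc_congr hEq,
    cfc_add (a := A) (fun μ => coefA d ξ * μ ^ 2) (fun μ => coefB d ξ * μ)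
      (hf := by fun_prop) (hg := by fun_prop),
    cfc_const_mul (coefA d ξ) (fun μ => μ ^ 2) A (by fun_prop),
    cfc_const_mul (coefB d ξ) (fun μ => μ) A (by fun_prop),
    cfc_pow_id A 2 (rho_sa ξ), cfc_id' (R := ℝ) (a := A) (rho_sa ξ), sq]

lemma norm_sCoord (hd : 3 ≤ d) {ξ : ℕ → ℝ} (hξ : SectionConstraints d ξ) :
    ‖sCoord d ξ‖ = rParam d ξ := by
  have h12 : 2 * ξ 1 - ((d : ℝ) - 2) = ξ 1 - ξ 2 := by linarith [hξ.1]
  rw [EuclideanSpace.norm_eq, rParam]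
  congr 1
  simp only [sCoord, WithLp.equiv_symm_apply, PiLp.toLp_apply, Fin.sum_univ_three,
    Matrix.cons_val_zero, Matrix.cons_val_one, Matrix.head_cons,
    Matrix.cons_val_two, Matrix.tail_cons, Real.norm_eq_abs, sq_abs, h12]
  ring

lemma inner_sCoord (hd : 3 ≤ d) (ξ η η' : ℕ → ℝ) :
    (inner ℝ (sCoord d ξ) (sCoord d η - sCoord d η') : ℝ)
      = (2 * ξ 1 - ((d : ℝ) - 2)) / d *
          ((2 * η 1 - ((d : ℝ) - 2)) / d - (2 * η' 1 - ((d : ℝ) - 2)) / d)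
        + ξ d * (η d - η' d) + ξ (d + 1) * (η (d + 1) - η' (d + 1)) := by
  simp only [PiLp.inner_apply, RCLike.inner_apply, conj_trivial, Fin.sum_univ_three,
    PiLp.sub_apply, sCoord, WithLp.equiv_symm_apply, PiLp.toLp_apply, Matrix.cons_val_zero,
    Matrix.cons_val_one, Matrix.head_cons, Matrix.cons_val_two, Matrix.tail_cons]
  ring

noncomputable def tPair (d : ℕ) (ξ η : ℕ → ℝ) : ℝ :=
  (η 1 + 1) * (ξ 1 + 1) / (d : ℝ) ^ 2 + (η 2 + 1) * (ξ 2 + 1) / (d : ℝ) ^ 2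
    + (η d * ξ d + η (d + 1) * ξ (d + 1)) / 2

lemma trace_rho (hd : 3 ≤ d) {η : ℕ → ℝ} (hη : SectionConstraints d η) :
    Matrix.trace (rho d η) = 1 := by
  have hd0 : (d : ℝ) ≠ 0 := by positivity
  rw [trace_blk hd (rho_blk hd hη), rho_zz hd, rho_oo hd]
  have h : (η 1 + 1) / (d : ℝ) + (η 2 + 1) / (d : ℝ) = 1 := by
    field_simp
    linarith [hη.1]
  have hC := congrArg Complex.ofReal h
  push_cast at hC ⊢
  exact hC

lemma trace_mul_rho (hd : 3 ≤ d) {ξ η : ℕ → ℝ} (hξ : SectionConstraints d ξ)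
    (hη : SectionConstraints d η) :
    Matrix.trace (rho d η * rho d ξ) = ((tPair d ξ η : ℝ) : ℂ) := by
  have hBη := rho_blk hd hη
  have hBξ := rho_blk hd hξ
  rw [trace_blk hd (blk_mul hd hBη hBξ), mul_apply_blk hd hBξ, mul_apply_blk hd hBξ,
    rho_zz hd, rho_oo hd, rho_zo hd, rho_oz hd, rho_zz hd, rho_oo hd, rho_zo hd, rho_oz hd,
    tPair]
  push_cast
  linear_combination (-(η (d + 1) : ℂ) * (ξ (d + 1) : ℂ) / 2) * Complex.I_sq

lemma qDiv_eq (hd : 3 ≤ d) {ξ η : ℕ → ℝ} (hξ : SectionConstraints d ξ)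
    (hη : SectionConstraints d η)
    (hpure : (η 1 - η 2) ^ 2 / (d : ℝ) ^ 2 + η d ^ 2 + η (d + 1) ^ 2 = 1)
    (hr0 : 0 < rParam d ξ) (hr1 : rParam d ξ < 1) :
    qDiv (rho d η) (rho d ξ)
      = coefA d ξ * (lam1 d ξ * lam2 d ξ) - (coefA d ξ + coefB d ξ) * tPair d ξ η := by
  haveI : NeZero d := ⟨by omega⟩
  rw [qDiv, matLog_idem (rho_sa η) (rho_idem hd hη hpure), matLog_rho hd hξ hr0 hr1,
    zero_sub, Matrix.mul_neg, Matrix.trace_neg, Matrix.mul_add, Matrix.mul_smul,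
    Matrix.mul_smul, Matrix.trace_add, Matrix.trace_smul, Matrix.trace_smul,
    rho_quad hd hξ, Matrix.mul_sub, Matrix.mul_smul, mul_blkE hd (rho_blk hd hη),
    Matrix.trace_sub, Matrix.trace_smul, trace_mul_rho hd hξ hη, trace_rho hd hη]
  have h : coefA d ξ • (((tPair d ξ η : ℝ) : ℂ) - (lam1 d ξ * lam2 d ξ) • (1 : ℂ))
      + coefB d ξ • ((tPair d ξ η : ℝ) : ℂ)
      = (((coefA d ξ * (tPair d ξ η - lam1 d ξ * lam2 d ξ)
          + coefB d ξ * tPair d ξ η : ℝ)) : ℂ) := by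
    push_cast [Complex.real_smul]
    ring
  rw [h, ← Complex.ofReal_neg, Complex.ofReal_re]
  ring

end Bisector

theorem divergence_bisector_is_geodesic_bisector
    (d : ℕ) (hd : 3 ≤ d) (η η' ξ : ℕ → ℝ)
    (hη : SectionConstraints d η) (hη' : SectionConstraints d η')
    (hξ : SectionConstraints d ξ)
    (hsη : ‖sCoord d η‖ = 1) (hsη' : ‖sCoord d η'‖ = 1)
    (hs0 : 0 < ‖sCoord d ξ‖) (hs1 : ‖sCoord d ξ‖ < 1) :
    qDiv (rho d η) (rho d ξ) = qDiv (rho d η') (rho d ξ) ↔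
      inner ℝ (sCoord d ξ) (sCoord d η - sCoord d η') = (0 : ℝ) := by
  have hd0 : (0 : ℝ) < d := by positivity
  have hr0 : 0 < rParam d ξ := by rw [← Bisector.norm_sCoord hd hξ]; exact hs0
  have hr1 : rParam d ξ < 1 := by rw [← Bisector.norm_sCoord hd hξ]; exact hs1
  have hpure : ∀ ζ : ℕ → ℝ, SectionConstraints d ζ → ‖sCoord d ζ‖ = 1 →
      (ζ 1 - ζ 2) ^ 2 / (d : ℝ) ^ 2 + ζ d ^ 2 + ζ (d + 1) ^ 2 = 1 := by
    intro ζ hζ hs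
    have hrζ : rParam d ζ = 1 := by rw [← Bisector.norm_sCoord hd hζ]; exact hs
    have h2 : rParam d ζ ^ 2
        = (ζ 1 - ζ 2) ^ 2 / (d : ℝ) ^ 2 + ζ d ^ 2 + ζ (d + 1) ^ 2 :=
      Real.sq_sqrt (by positivity)
    rw [hrζ] at h2
    linarith [h2]
  rw [Bisector.qDiv_eq hd hξ hη (hpure η hη hsη) hr0 hr1,
    Bisector.qDiv_eq hd hξ hη' (hpure η' hη' hsη') hr0 hr1]
  -- coefficient positivity
  have hl1e := Bisector.lam1_eq hd hξ
  have hl2e := Bisector.lam2_eq hd hξ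
  have hl1pos : 0 < lam1 d ξ := by rw [hl1e]; linarith
  have hl2pos : 0 < lam2 d ξ := by rw [hl2e]; linarith
  have hlt : lam2 d ξ < lam1 d ξ := by rw [hl1e, hl2e]; linarith
  have hK : Bisector.coefA d ξ + Bisector.coefB d ξ
      = (Real.log (lam1 d ξ) - Real.log (lam2 d ξ)) / (lam1 d ξ - lam2 d ξ) := by
    have hsum : lam2 d ξ = 1 - lam1 d ξ := by rw [hl1e, hl2e]; ring
    rw [Bisector.coefB, Bisector.coefA, hsum]
    have h1ne : lam1 d ξ ≠ 0 := by linarith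
    have h2ne : 1 - lam1 d ξ ≠ 0 := by rw [← hsum]; linarith
    have h12 : lam1 d ξ - (1 - lam1 d ξ) ≠ 0 := by rw [← hsum]; linarith
    field_simp
    ring
  have hKpos : 0 < Bisector.coefA d ξ + Bisector.coefB d ξ := by
    rw [hK]
    exact div_pos (by linarith [Real.log_lt_log hl2pos hlt]) (by linarith)
  -- inner product vs Bisector.tPair difference
  have hdiff : (inner ℝ (sCoord d ξ) (sCoord d η - sCoord d η') : ℝ)
      = 2 * (Bisector.tPair d ξ η - Bisector.tPair d ξ η') := by
    rw [Bisector.inner_sCoord hd, Bisector.tPair, Bisector.tPair]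
    have hx2 : ξ 2 = (d : ℝ) - 2 - ξ 1 := by linarith [hξ.1]
    have hy2 : η 2 = (d : ℝ) - 2 - η 1 := by linarith [hη.1]
    have hy2' : η' 2 = (d : ℝ) - 2 - η' 1 := by linarith [hη'.1]
    rw [hx2, hy2, hy2']
    field_simp
    ring
  rw [hdiff]
  constructor
  · intro h
    have h2 : (Bisector.coefA d ξ + Bisector.coefB d ξ) * (Bisector.tPair d ξ η - Bisector.tPair d ξ η') = 0 := by linarith
    have h3 : Bisector.tPair d ξ η - Bisector.tPair d ξ η' = 0 :=
      (mul_eq_zero.1 h2).resolve_left hKpos.ne'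
    linarith
  · intro h
    have h3 : Bisector.tPair d ξ η = Bisector.tPair d ξ η' := by linarith
    rw [h3]
end

section
/- Let d ≥ 3 and suppose η, η̃, ξ ∈ ℝ^{d+1} all satisfy the section constraints, with r(η) = r(η̃) = 1 (so ρ(η) and ρ(η̃) are pure states) and 0 < r(ξ) < 1. Then D(ρ(η)‖ρ(ξ)) = D(ρ(η̃)‖ρ(ξ)) if and only if (η_d − η̃_d)·ξ_d + (η_{d+1} − η̃_{d+1})·ξ_{d+1} + (4/d²)·(η_1 − η̃_1)·(ξ_1 − (d−2)/2) = 0. -/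
namespace BisectorAux
open Matrix

def emb (d : ℕ) (a b c e : ℂ) : Matrix (Fin d) (Fin d) ℂ := fun i j =>
  if (i : ℕ) = 0 ∧ (j : ℕ) = 0 then a
  else if (i : ℕ) = 0 ∧ (j : ℕ) = 1 then b
  else if (i : ℕ) = 1 ∧ (j : ℕ) = 0 then c
  else if (i : ℕ) = 1 ∧ (j : ℕ) = 1 then e
  else 0

variable {d : ℕ}

lemma sum_two (hd : 3 ≤ d) (f : Fin d → ℂ) (h : ∀ k : Fin d, 2 ≤ (k : ℕ) → f k = 0) :
    ∑ k, f k = f ⟨0, by omega⟩ + f ⟨1, by omega⟩ := by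
  rw [← Finset.sum_subset
    (Finset.subset_univ ({⟨0, by omega⟩, ⟨1, by omega⟩} : Finset (Fin d)))]
  · rw [Finset.sum_pair (by simp [Fin.ext_iff])]
  · intro x _ hx
    apply h
    simp only [Finset.mem_insert, Finset.mem_singleton, Fin.ext_iff] at hx
    push_neg at hx
    omega

lemma emb_mul (hd : 3 ≤ d) (a b c e a' b' c' e' : ℂ) :
    emb d a b c e * emb d a' b' c' e' =
      emb d (a * a' + b * c') (a * b' + b * e') (c * a' + e * c') (c * b' + e * e') := by
  ext i j
  rw [Matrix.mul_apply, sum_two hd _ (fun k hk => by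
    have h1 : ¬((k : ℕ) = 0) := by omega
    have h2 : ¬((k : ℕ) = 1) := by omega
    simp [emb, h1, h2])]
  by_cases hi0 : (i : ℕ) = 0 <;> by_cases hi1 : (i : ℕ) = 1 <;>
    by_cases hj0 : (j : ℕ) = 0 <;> by_cases hj1 : (j : ℕ) = 1 <;>
    simp [emb, hi0, hi1, hj0, hj1]

lemma emb_trace (hd : 3 ≤ d) (a b c e : ℂ) : (emb d a b c e).trace = a + e := by
  rw [Matrix.trace]
  rw [show ∑ i, (emb d a b c e).diag i = ∑ i, (fun i : Fin d => emb d a b c e i i) i from rfl]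
  rw [sum_two hd _ (fun k hk => by
    have h1 : ¬((k : ℕ) = 0) := by omega
    have h2 : ¬((k : ℕ) = 1) := by omega
    simp [emb, h1, h2])]
  simp [emb]

lemma emb_congr {a b c e a' b' c' e' : ℂ} (h1 : a = a') (h2 : b = b')
    (h3 : c = c') (h4 : e = e') : emb d a b c e = emb d a' b' c' e' := by
  rw [h1, h2, h3, h4]

lemma emb_smul (z : ℂ) (a b c e : ℂ) :
    z • emb d a b c e = emb d (z * a) (z * b) (z * c) (z * e) := by
  ext i j
  simp only [Matrix.smul_apply, emb, smul_eq_mul]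
  split <;> [skip; split] <;> [rfl; rfl; split] <;> [rfl; split] <;> simp

lemma emb_sub (a b c e a' b' c' e' : ℂ) :
    emb d a b c e - emb d a' b' c' e' = emb d (a - a') (b - b') (c - c') (e - e') := by
  ext i j
  simp only [Matrix.sub_apply, emb]
  split <;> [skip; split] <;> [rfl; rfl; split] <;> [rfl; split] <;> simp

lemma emb_isSelfAdjoint (a e : ℝ) (b : ℂ) :
    IsSelfAdjoint (emb d (a : ℂ) b ((starRingEnd ℂ) b) (e : ℂ)) := by
  rw [_root_.IsSelfAdjoint, Matrix.star_eq_conjTranspose]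
  ext i j
  simp only [Matrix.conjTranspose_apply, emb]
  by_cases hi0 : (i : ℕ) = 0 <;> by_cases hi1 : (i : ℕ) = 1 <;>
    by_cases hj0 : (j : ℕ) = 0 <;> by_cases hj1 : (j : ℕ) = 1 <;>
    simp [hi0, hi1, hj0, hj1, Complex.conj_ofReal]

lemma sum_Icc_eq_one (hd : 3 ≤ d) (ξ : ℕ → ℝ) (hξ : SectionConstraints d ξ) :
    ∑ k ∈ Finset.Icc 1 (d - 1), ξ k = 1 := by
  have h3 : Finset.Icc 1 (d - 1) = insert 1 (insert 2 (Finset.Icc 3 (d - 1))) := by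
    ext k
    simp only [Finset.mem_Icc, Finset.mem_insert]
    omega
  rw [h3, Finset.sum_insert (by simp only [Finset.mem_insert, Finset.mem_Icc]; omega),
    Finset.sum_insert (by simp only [Finset.mem_Icc]; omega)]
  have hc : ∑ k ∈ Finset.Icc 3 (d - 1), ξ k = ∑ k ∈ Finset.Icc 3 (d - 1), (-1 : ℝ) :=
    Finset.sum_congr rfl fun k hk =>
      hξ.2 k (Finset.mem_Icc.mp hk).1 (Finset.mem_Icc.mp hk).2
  rw [hc, Finset.sum_const, Nat.card_Icc, nsmul_eq_mul]
  have h4 : d - 1 + 1 - 3 = d - 3 := by omega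
  rw [h4]
  have h5 : ((d - 3 : ℕ) : ℝ) = (d : ℝ) - 3 := by
    have := Nat.cast_sub (show 3 ≤ d from hd) (R := ℝ)
    simpa using this
  rw [h5]
  linarith [hξ.1]

lemma rho_eq (hd : 3 ≤ d) (ξ : ℕ → ℝ) (hξ : SectionConstraints d ξ) :
    rho d ξ = emb d (((ξ 1 + 1) / d : ℝ) : ℂ) (((ξ d : ℂ) - Complex.I * (ξ (d + 1) : ℂ)) / 2)
      (((ξ d : ℂ) + Complex.I * (ξ (d + 1) : ℂ)) / 2) (((ξ 2 + 1) / d : ℝ) : ℂ) := by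
  have hsum := sum_Icc_eq_one hd ξ hξ
  ext i j
  have hi := i.isLt
  have hj := j.isLt
  by_cases hij : i = j
  · subst hij
    by_cases hi0 : (i : ℕ) = 0
    · simp [rho, emb, hi0, show ¬(0 = d - 1) by omega]
    · by_cases hi1 : (i : ℕ) = 1
      · simp [rho, emb, hi1, hi0, show ¬(1 = d - 1) by omega]
      · by_cases hid : (i : ℕ) = d - 1
        · simp [rho, emb, hid, hi0, hi1, hsum, show ¬(d - 1 = 0) by omega,
            show ¬(d - 1 = 1) by omega]
        · have h1 : ξ ((i : ℕ) + 1) = -1 := hξ.2 _ (by omega) (by omega)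
          simp [rho, emb, hi0, hi1, hid, h1]
  · have hij' : ¬((i : ℕ) = (j : ℕ)) := fun h => hij (Fin.ext h)
    by_cases hi0 : (i : ℕ) = 0 <;> by_cases hi1 : (i : ℕ) = 1 <;>
      by_cases hj0 : (j : ℕ) = 0 <;> by_cases hj1 : (j : ℕ) = 1 <;>
      simp [rho, emb, hij, hi0, hi1, hj0, hj1] <;> omega

/-- coefficients of the interpolating quadratic for `Real.log` -/
noncomputable def lamP (d : ℕ) (ξ : ℕ → ℝ) : ℝ := (1 + rParam d ξ) / 2
noncomputable def lamM (d : ℕ) (ξ : ℕ → ℝ) : ℝ := (1 - rParam d ξ) / 2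
noncomputable def alp (d : ℕ) (ξ : ℕ → ℝ) : ℝ :=
  (Real.log (lamP d ξ) / lamP d ξ - Real.log (lamM d ξ) / lamM d ξ) / (lamP d ξ - lamM d ξ)
noncomputable def bet (d : ℕ) (ξ : ℕ → ℝ) : ℝ :=
  Real.log (lamP d ξ) / lamP d ξ - alp d ξ * lamP d ξ
noncomputable def Tone (d : ℕ) (η ξ : ℕ → ℝ) : ℝ :=
  ((η 1 + 1) * (ξ 1 + 1) + (η 2 + 1) * (ξ 2 + 1)) / (d : ℝ) ^ 2 +
    (η d * ξ d + η (d + 1) * ξ (d + 1)) / 2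

lemma real_smul_mat (t : ℝ) (M : Matrix (Fin d) (Fin d) ℂ) :
    t • M = ((t : ℂ)) • M := by
  ext i j
  simp [Matrix.smul_apply, Complex.real_smul]

lemma qDiv_eval (hd : 3 ≤ d) (η ξ : ℕ → ℝ)
    (hη : SectionConstraints d η) (hξ : SectionConstraints d ξ)
    (hrη : rParam d η = 1) (hr0 : 0 < rParam d ξ) (hr1 : rParam d ξ < 1) :
    qDiv (rho d η) (rho d ξ) =
      -(alp d ξ * (Tone d η ξ - (1 - rParam d ξ ^ 2) / 4) + bet d ξ * Tone d η ξ) := by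
  have hd0 : (0 : ℝ) < d := by
    have : (3 : ℝ) ≤ d := by exact_mod_cast hd
    linarith
  have hdne : (d : ℝ) ≠ 0 := ne_of_gt hd0
  -- abbreviations
  set r := rParam d ξ with hrdef
  set l1 := lamP d ξ with hl1def
  set l2 := lamM d ξ with hl2def
  have hl1 : l1 = (1 + r) / 2 := rfl
  have hl2 : l2 = (1 - r) / 2 := rfl
  have hl1pos : 0 < l1 := by rw [hl1]; linarith
  have hl2pos : 0 < l2 := by rw [hl2]; linarith
  have hl1ne : l1 ≠ 0 := ne_of_gt hl1pos
  have hl2ne : l2 ≠ 0 := ne_of_gt hl2pos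
  have hldiff : l1 - l2 = r := by rw [hl1, hl2]; ring
  have hldiffne : l1 - l2 ≠ 0 := by rw [hldiff]; exact ne_of_gt hr0
  have hsuml : l1 + l2 = 1 := by rw [hl1, hl2]; ring
  set L1 := Real.log l1 with hL1def
  set L2 := Real.log l2 with hL2def
  set A := alp d ξ with hAdef
  set B := bet d ξ with hBdef
  have hA : A = (L1 / l1 - L2 / l2) / (l1 - l2) := rfl
  have hB : B = L1 / l1 - A * l1 := rfl
  set dt := (1 - r ^ 2) / 4 with hdtdef
  have hdtl : l1 * l2 = dt := by rw [hl1, hl2, hdtdef]; ring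
  -- squared radii
  have hrsq : r ^ 2 = (ξ 1 - ξ 2) ^ 2 / (d : ℝ) ^ 2 + ξ d ^ 2 + ξ (d + 1) ^ 2 := by
    rw [hrdef, rParam]
    exact Real.sq_sqrt (by positivity)
  have hηsq : (η 1 - η 2) ^ 2 / (d : ℝ) ^ 2 + η d ^ 2 + η (d + 1) ^ 2 = 1 := by
    have h := Real.sq_sqrt
      (show (0:ℝ) ≤ (η 1 - η 2) ^ 2 / (d : ℝ) ^ 2 + η d ^ 2 + η (d + 1) ^ 2 by positivity)
    rw [show Real.sqrt ((η 1 - η 2) ^ 2 / (d : ℝ) ^ 2 + η d ^ 2 + η (d + 1) ^ 2)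
        = rParam d η from rfl, hrη] at h
    simpa using h.symm
  -- conjugation helper
  have hconj : ∀ x y : ℝ, ((x : ℂ) + Complex.I * y) / 2
      = (starRingEnd ℂ) (((x : ℂ) - Complex.I * y) / 2) := by
    intro x y
    have h2 : (starRingEnd ℂ) (((x : ℂ) - Complex.I * y) / 2)
        = ((starRingEnd ℂ) ((x:ℂ)) - (starRingEnd ℂ) Complex.I * (starRingEnd ℂ) ((y:ℂ))) / 2 := by
      rw [map_div₀, map_sub, _root_.map_mul, map_ofNat]
    rw [h2, Complex.conj_I, Complex.conj_ofReal, Complex.conj_ofReal]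
    ring
  -- self-adjointness
  have hσsa : IsSelfAdjoint (rho d η) := by
    rw [rho_eq hd η hη, hconj]; exact emb_isSelfAdjoint _ _ _
  have hρsa : IsSelfAdjoint (rho d ξ) := by
    rw [rho_eq hd ξ hξ, hconj]; exact emb_isSelfAdjoint _ _ _
  -- scalar identities
  have hpqη : (η 1 + 1) / (d:ℝ) + (η 2 + 1) / (d:ℝ) = 1 := by
    field_simp
    linarith [hη.1]
  have hpqξ : (ξ 1 + 1) / (d:ℝ) + (ξ 2 + 1) / (d:ℝ) = 1 := by
    field_simp
    linarith [hξ.1]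
  have hηsq2 : (η 1 - η 2) ^ 2 + (η d ^ 2 + η (d + 1) ^ 2) * (d:ℝ) ^ 2 = (d:ℝ) ^ 2 := by
    have h := hηsq
    field_simp at h
    linarith [h]
  have hdetη : ((η 1 + 1) / (d:ℝ)) * ((η 2 + 1) / (d:ℝ))
      = (η d ^ 2 + η (d + 1) ^ 2) / 4 := by
    have h1 : (η 1 + η 2) = (d : ℝ) - 2 := hη.1
    field_simp
    linear_combination (-1 : ℝ) * hηsq2 + (η 1 + η 2 + 2 + (d:ℝ)) * h1
  have hrsq2 : r ^ 2 * (d:ℝ) ^ 2 = (ξ 1 - ξ 2) ^ 2 + (ξ d ^ 2 + ξ (d + 1) ^ 2) * (d:ℝ) ^ 2 := by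
    have h := hrsq
    field_simp at h
    linarith [h]
  have hdetξ : ((ξ 1 + 1) / (d:ℝ)) * ((ξ 2 + 1) / (d:ℝ))
      = (ξ d ^ 2 + ξ (d + 1) ^ 2) / 4 + dt := by
    have h1 : (ξ 1 + ξ 2) = (d : ℝ) - 2 := hξ.1
    rw [hdtdef]
    field_simp
    linear_combination hrsq2 + (ξ 1 + ξ 2 + 2 + (d:ℝ)) * h1
  -- complex product of conjugate pair
  have hbc : ∀ x y : ℝ, (((x : ℂ) - Complex.I * y) / 2) * (((x : ℂ) + Complex.I * y) / 2)
      = (((x ^ 2 + y ^ 2) / 4 : ℝ) : ℂ) := by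
    intro x y
    push_cast
    linear_combination (-(y:ℂ) ^ 2 / 4) * Complex.I_mul_I
  have hcb : ∀ x y : ℝ, (((x : ℂ) + Complex.I * y) / 2) * (((x : ℂ) - Complex.I * y) / 2)
      = (((x ^ 2 + y ^ 2) / 4 : ℝ) : ℂ) := by
    intro x y
    push_cast
    linear_combination (-(y:ℂ) ^ 2 / 4) * Complex.I_mul_I
  -- σ is idempotent
  have hσmul : rho d η * rho d η = rho d η := by
    rw [rho_eq hd η hη, emb_mul hd]
    refine emb_congr ?_ ?_ ?_ ?_
    · rw [hbc, ← Complex.ofReal_mul, ← Complex.ofReal_add]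
      norm_cast
      linear_combination -hdetη + ((η 1 + 1) / (d:ℝ)) * hpqη
    · rw [show (((η 1 + 1) / d : ℝ) : ℂ) * (((η d : ℂ) - Complex.I * (η (d+1) : ℂ)) / 2)
          + (((η d : ℂ) - Complex.I * (η (d+1) : ℂ)) / 2) * (((η 2 + 1) / d : ℝ) : ℂ)
          = (((η d : ℂ) - Complex.I * (η (d+1) : ℂ)) / 2)
            * ((((η 1 + 1) / d : ℝ) : ℂ) + (((η 2 + 1) / d : ℝ) : ℂ)) by ring]
      rw [← Complex.ofReal_add, hpqη]
      simp
    · rw [show (((η d : ℂ) + Complex.I * (η (d+1) : ℂ)) / 2) * (((η 1 + 1) / d : ℝ) : ℂ)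
          + (((η 2 + 1) / d : ℝ) : ℂ) * (((η d : ℂ) + Complex.I * (η (d+1) : ℂ)) / 2)
          = (((η d : ℂ) + Complex.I * (η (d+1) : ℂ)) / 2)
            * ((((η 1 + 1) / d : ℝ) : ℂ) + (((η 2 + 1) / d : ℝ) : ℂ)) by ring]
      rw [← Complex.ofReal_add, hpqη]
      simp
    · rw [hcb, ← Complex.ofReal_mul, ← Complex.ofReal_add]
      norm_cast
      linear_combination -hdetη + ((η 2 + 1) / (d:ℝ)) * hpqη
  -- ρ quadratic identity
  have hJ : ∀ M : Matrix (Fin d) (Fin d) ℂ, True := fun _ => trivial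
  have hρmul : rho d ξ * rho d ξ = rho d ξ - ((dt : ℝ) : ℂ) • emb d 1 0 0 1 := by
    rw [rho_eq hd ξ hξ, emb_mul hd, emb_smul, emb_sub]
    refine emb_congr ?_ ?_ ?_ ?_
    · rw [hbc, ← Complex.ofReal_mul, ← Complex.ofReal_add, mul_one, ← Complex.ofReal_sub]
      norm_cast
      linear_combination -hdetξ + ((ξ 1 + 1) / (d:ℝ)) * hpqξ
    · rw [mul_zero, sub_zero,
        show (((ξ 1 + 1) / d : ℝ) : ℂ) * (((ξ d : ℂ) - Complex.I * (ξ (d+1) : ℂ)) / 2)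
          + (((ξ d : ℂ) - Complex.I * (ξ (d+1) : ℂ)) / 2) * (((ξ 2 + 1) / d : ℝ) : ℂ)
          = (((ξ d : ℂ) - Complex.I * (ξ (d+1) : ℂ)) / 2)
            * ((((ξ 1 + 1) / d : ℝ) : ℂ) + (((ξ 2 + 1) / d : ℝ) : ℂ)) by ring]
      rw [← Complex.ofReal_add, hpqξ]
      simp
    · rw [mul_zero, sub_zero,
        show (((ξ d : ℂ) + Complex.I * (ξ (d+1) : ℂ)) / 2) * (((ξ 1 + 1) / d : ℝ) : ℂ)
          + (((ξ 2 + 1) / d : ℝ) : ℂ) * (((ξ d : ℂ) + Complex.I * (ξ (d+1) : ℂ)) / 2)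
          = (((ξ d : ℂ) + Complex.I * (ξ (d+1) : ℂ)) / 2)
            * ((((ξ 1 + 1) / d : ℝ) : ℂ) + (((ξ 2 + 1) / d : ℝ) : ℂ)) by ring]
      rw [← Complex.ofReal_add, hpqξ]
      simp
    · rw [hcb, ← Complex.ofReal_mul, ← Complex.ofReal_add, mul_one, ← Complex.ofReal_sub]
      norm_cast
      linear_combination -hdetξ + ((ξ 2 + 1) / (d:ℝ)) * hpqξ
  have hJρ : emb d 1 0 0 1 * rho d ξ = rho d ξ := by
    rw [rho_eq hd ξ hξ, emb_mul hd]
    refine emb_congr ?_ ?_ ?_ ?_ <;> ring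
  have hσJtr : (rho d η * emb d 1 0 0 1).trace = 1 := by
    rw [rho_eq hd η hη, emb_mul hd, emb_trace hd]
    rw [show (((η 1 + 1) / d : ℝ) : ℂ) * 1 + (((η d : ℂ) - Complex.I * (η (d+1) : ℂ)) / 2) * 0
        + ((((η d : ℂ) + Complex.I * (η (d+1) : ℂ)) / 2) * 0 + (((η 2 + 1) / d : ℝ) : ℂ) * 1)
        = (((η 1 + 1) / d : ℝ) : ℂ) + (((η 2 + 1) / d : ℝ) : ℂ) by ring]
    rw [← Complex.ofReal_add, hpqη]
    simp
  have hσρtr : (rho d η * rho d ξ).trace = ((Tone d η ξ : ℝ) : ℂ) := by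
    rw [rho_eq hd η hη, rho_eq hd ξ hξ, emb_mul hd, emb_trace hd, Tone]
    push_cast
    linear_combination ((-(η (d+1) : ℂ) * (ξ (d+1) : ℂ)) / 2) * Complex.I_mul_I
  -- matLog σ = 0
  have hlogσ : matLog (rho d η) = 0 := by
    have h1 : cfc (fun t : ℝ => t ^ 2 - t) (rho d η) = cfc (fun _ : ℝ => (0:ℝ)) (rho d η) := by
      rw [cfc_const_zero,
        cfc_sub (fun t : ℝ => t ^ 2) (fun t : ℝ => t) (rho d η) (by fun_prop) (by fun_prop),
        cfc_pow_id (rho d η) 2 hσsa, cfc_id' ℝ (rho d η) hσsa, sq, hσmul, sub_self]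
    have h2 := eqOn_of_cfc_eq_cfc h1 (by fun_prop) (by fun_prop) hσsa
    have h3 : Set.EqOn Real.log (fun _ : ℝ => (0:ℝ)) (spectrum ℝ (rho d η)) := by
      intro t ht
      have h4 : t ^ 2 - t = 0 := h2 ht
      have h5 : t * (t - 1) = 0 := by linear_combination h4
      rcases mul_eq_zero.mp h5 with h6 | h6
      · simp [h6, Real.log_zero]
      · have : t = 1 := by linarith
        simp [this, Real.log_one]
    show cfc Real.log (rho d η) = 0
    rw [cfc_congr h3, cfc_const_zero]
  -- matLog ρ = A • ρ^2 + B • ρ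
  have hρ3 : (rho d ξ) ^ 3 = (rho d ξ) ^ 2 - ((dt : ℝ) : ℂ) • rho d ξ := by
    rw [pow_succ, sq, hρmul, sub_mul, smul_mul_assoc, hJρ, ← hρmul, ← sq]
  have hcube : cfc (fun t : ℝ => t ^ 3 - t ^ 2 + dt * t) (rho d ξ)
      = cfc (fun _ : ℝ => (0:ℝ)) (rho d ξ) := by
    rw [cfc_const_zero,
      cfc_add (a := rho d ξ) (f := fun t : ℝ => t ^ 3 - t ^ 2) (g := fun t : ℝ => dt * t)
        (by fun_prop) (by fun_prop),
      cfc_sub (fun t : ℝ => t ^ 3) (fun t : ℝ => t ^ 2) (rho d ξ) (by fun_prop) (by fun_prop),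
      cfc_pow_id (rho d ξ) 3 hρsa, cfc_pow_id (rho d ξ) 2 hρsa,
      cfc_const_mul_id dt (rho d ξ) hρsa, hρ3, real_smul_mat]
    abel
  have hspecρ : ∀ t ∈ spectrum ℝ (rho d ξ), t = 0 ∨ t = l1 ∨ t = l2 := by
    have h2 := eqOn_of_cfc_eq_cfc hcube (by fun_prop) (by fun_prop) hρsa
    intro t ht
    have h4 : t ^ 3 - t ^ 2 + dt * t = 0 := h2 ht
    have h5 : t * (t - l1) * (t - l2) = 0 := by
      linear_combination h4 - t ^ 2 * hsuml + t * hdtl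
    rcases mul_eq_zero.mp h5 with h6 | h6
    · rcases mul_eq_zero.mp h6 with h7 | h7
      · exact Or.inl h7
      · exact Or.inr (Or.inl (by linarith))
    · exact Or.inr (Or.inr (by linarith))
  have hlogeq : Set.EqOn Real.log (fun t : ℝ => A * t ^ 2 + B * t) (spectrum ℝ (rho d ξ)) := by
    intro t ht
    rcases hspecρ t ht with h | h | h
    · simp [h, Real.log_zero]
    · subst h
      show Real.log l1 = A * l1 ^ 2 + B * l1
      rw [hB, ← hL1def]
      field_simp
      ring
    · subst h
      show Real.log l2 = A * l2 ^ 2 + B * l2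
      rw [hB, hA, ← hL2def]
      field_simp
      ring
  have hlogρ : matLog (rho d ξ) = A • (rho d ξ) ^ 2 + B • rho d ξ := by
    show cfc Real.log (rho d ξ) = _
    rw [cfc_congr hlogeq,
      cfc_add (a := rho d ξ) (f := fun t : ℝ => A * t ^ 2) (g := fun t : ℝ => B * t)
        (by fun_prop) (by fun_prop),
      cfc_const_mul A (fun t : ℝ => t ^ 2) (rho d ξ) (by fun_prop),
      cfc_const_mul B (fun t : ℝ => t) (rho d ξ) (by fun_prop),
      cfc_pow_id (rho d ξ) 2 hρsa, cfc_id' ℝ (rho d ξ) hρsa]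
  -- put it together
  show (Matrix.trace (rho d η * (matLog (rho d η) - matLog (rho d ξ)))).re = _
  rw [hlogσ, hlogρ, zero_sub, mul_neg, mul_add, mul_smul_comm, mul_smul_comm,
    Matrix.trace_neg, Matrix.trace_add, Matrix.trace_smul, Matrix.trace_smul]
  rw [sq, hρmul, mul_sub, mul_smul_comm, Matrix.trace_sub, Matrix.trace_smul,
    hσρtr, hσJtr]
  have hfin : (A • (((Tone d η ξ : ℝ) : ℂ) - ((dt:ℝ):ℂ) • (1:ℂ)) + B • ((Tone d η ξ : ℝ) : ℂ))
      = (((A * (Tone d η ξ - dt) + B * Tone d η ξ) : ℝ) : ℂ) := by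
    rw [Complex.real_smul, Complex.real_smul, smul_eq_mul]
    push_cast
    ring
  rw [hfin, ← Complex.ofReal_neg, Complex.ofReal_re]

end BisectorAux

theorem divergence_bisector_condition
    (d : ℕ) (hd : 3 ≤ d) (η η' ξ : ℕ → ℝ)
    (hη : SectionConstraints d η) (hη' : SectionConstraints d η')
    (hξ : SectionConstraints d ξ)
    (hrη : rParam d η = 1) (hrη' : rParam d η' = 1)
    (hr0 : 0 < rParam d ξ) (hr1 : rParam d ξ < 1) :
    qDiv (rho d η) (rho d ξ) = qDiv (rho d η') (rho d ξ) ↔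
      (η d - η' d) * ξ d + (η (d + 1) - η' (d + 1)) * ξ (d + 1) +
        4 / (d : ℝ) ^ 2 * (η 1 - η' 1) * (ξ 1 - ((d : ℝ) - 2) / 2) = 0 := by
  rw [BisectorAux.qDiv_eval hd η ξ hη hξ hrη hr0 hr1,
    BisectorAux.qDiv_eval hd η' ξ hη' hξ hrη' hr0 hr1]
  have hd0 : (0 : ℝ) < d := by
    have : (3 : ℝ) ≤ d := by exact_mod_cast hd
    linarith
  have hdne : (d : ℝ) ≠ 0 := ne_of_gt hd0
  have hl1pos : 0 < (1 + rParam d ξ) / 2 := by linarith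
  have hl2pos : 0 < (1 - rParam d ξ) / 2 := by linarith
  have hABr : (BisectorAux.alp d ξ + BisectorAux.bet d ξ) * rParam d ξ
      = Real.log ((1 + rParam d ξ) / 2) - Real.log ((1 - rParam d ξ) / 2) := by
    simp only [BisectorAux.bet, BisectorAux.alp, BisectorAux.lamP, BisectorAux.lamM]
    have h1 : (1 + rParam d ξ) / 2 ≠ 0 := ne_of_gt hl1pos
    have h2 : (1 - rParam d ξ) / 2 ≠ 0 := ne_of_gt hl2pos
    have h3 : (1 + rParam d ξ) / 2 - (1 - rParam d ξ) / 2 = rParam d ξ := by ring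
    rw [h3]
    have h4 : rParam d ξ ≠ 0 := ne_of_gt hr0
    have h5 : 1 + rParam d ξ ≠ 0 := by positivity
    have h6 : 1 - rParam d ξ ≠ 0 := by
      intro hc
      rw [sub_eq_zero] at hc
      exact absurd hc.symm (ne_of_lt hr1)
    field_simp
    ring
  have hABne : BisectorAux.alp d ξ + BisectorAux.bet d ξ ≠ 0 := by
    intro h0
    rw [h0, zero_mul] at hABr
    have hlt := Real.log_lt_log hl2pos (show (1 - rParam d ξ) / 2 < (1 + rParam d ξ) / 2 by
      linarith)
    linarith
  have hT : BisectorAux.Tone d η ξ - BisectorAux.Tone d η' ξ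
      = ((η d - η' d) * ξ d + (η (d + 1) - η' (d + 1)) * ξ (d + 1) +
        4 / (d : ℝ) ^ 2 * (η 1 - η' 1) * (ξ 1 - ((d : ℝ) - 2) / 2)) / 2 := by
    unfold BisectorAux.Tone
    have hη2 : η 2 = (d : ℝ) - 2 - η 1 := by linarith [hη.1]
    have hη'2 : η' 2 = (d : ℝ) - 2 - η' 1 := by linarith [hη'.1]
    have hξ2 : ξ 2 = (d : ℝ) - 2 - ξ 1 := by linarith [hξ.1]
    rw [hη2, hη'2, hξ2]
    field_simp
    ring
  constructor
  · intro h
    have h2 : (BisectorAux.alp d ξ + BisectorAux.bet d ξ)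
        * (BisectorAux.Tone d η ξ - BisectorAux.Tone d η' ξ) = 0 := by
      linear_combination -h
    have h3 := (mul_eq_zero.mp h2).resolve_left hABne
    rw [hT] at h3
    linarith
  · intro h
    have h3 : BisectorAux.Tone d η ξ = BisectorAux.Tone d η' ξ := by
      rw [h] at hT
      norm_num at hT
      linarith
    rw [h3]
end

section
/- Let d ≥ 3 and suppose η, η̃, ξ ∈ ℝ^{d+1} all satisfy the section constraints, with 0 < r(ξ) < 1. Then Re Tr((ρ(η) − ρ(η̃)) · log ρ(ξ)) = (1/(2·r(ξ))) · [ (η_d − η̃_d)·ξ_d + (η_{d+1} − η̃_{d+1})·ξ_{d+1} + (4/d²)·(η_1 − η̃_1)·(ξ_1 − (d−2)/2) ] · log(λ_1(ξ)/λ_2(ξ)). -/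
/-! ### Auxiliary block-matrix machinery -/

noncomputable def blk (d : ℕ) (A : Matrix (Fin 2) (Fin 2) ℂ) : Matrix (Fin d) (Fin d) ℂ :=
  fun i j => if hi : (i : ℕ) < 2 then if hj : (j : ℕ) < 2 then A ⟨i, hi⟩ ⟨j, hj⟩ else 0 else 0

lemma sum_two {d : ℕ} (hd : 2 ≤ d) (f : Fin d → ℂ)
    (hf : ∀ k : Fin d, ¬ (k : ℕ) < 2 → f k = 0) :
    ∑ k, f k = f ⟨0, by omega⟩ + f ⟨1, by omega⟩ := by
  classical
  rw [← Finset.sum_subset (Finset.subset_univ {(⟨0, by omega⟩ : Fin d), ⟨1, by omega⟩})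
    (fun x _ hx => hf x (by
      intro hlt
      apply hx
      simp only [Finset.mem_insert, Finset.mem_singleton, Fin.ext_iff]
      omega))]
  rw [Finset.sum_pair (by simp [Fin.ext_iff])]

lemma blk_mul {d : ℕ} (hd : 2 ≤ d) (A B : Matrix (Fin 2) (Fin 2) ℂ) :
    blk d A * blk d B = blk d (A * B) := by
  ext i j
  rw [Matrix.mul_apply, sum_two hd _ (fun k hk => by simp [blk, hk])]
  by_cases hi : (i : ℕ) < 2
  · by_cases hj : (j : ℕ) < 2
    · simp [blk, hi, hj, Matrix.mul_apply, Fin.sum_univ_two]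
    · simp [blk, hi, hj]
  · simp [blk, hi]

lemma trace_blk {d : ℕ} (hd : 2 ≤ d) (A : Matrix (Fin 2) (Fin 2) ℂ) :
    (blk d A).trace = A.trace := by
  rw [Matrix.trace, Matrix.trace_fin_two]
  unfold Matrix.diag
  rw [sum_two hd _ (fun k hk => by simp [blk, hk])]
  simp only [blk]
  norm_num

lemma blk_sub {d : ℕ} (A B : Matrix (Fin 2) (Fin 2) ℂ) :
    blk d A - blk d B = blk d (A - B) := by
  ext i j
  simp only [blk, Matrix.sub_apply]
  split_ifs <;> simp

lemma blk_smul {d : ℕ} (c : ℝ) (A : Matrix (Fin 2) (Fin 2) ℂ) :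
    c • blk d A = blk d (c • A) := by
  ext i j
  simp only [blk, Matrix.smul_apply]
  split_ifs <;> simp

lemma blk_conjTranspose {d : ℕ} (A : Matrix (Fin 2) (Fin 2) ℂ) :
    (blk d A).conjTranspose = blk d A.conjTranspose := by
  ext i j
  simp only [blk, Matrix.conjTranspose_apply]
  split_ifs <;> simp

/-! ### The 2×2 block of `rho` -/

noncomputable def Mmat (d : ℕ) (ξ : ℕ → ℝ) : Matrix (Fin 2) (Fin 2) ℂ :=
  !![(((ξ 1 + 1) / d : ℝ) : ℂ), ((ξ d : ℂ) - Complex.I * (ξ (d + 1) : ℂ)) / 2;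
     ((ξ d : ℂ) + Complex.I * (ξ (d + 1) : ℂ)) / 2, (((ξ 2 + 1) / d : ℝ) : ℂ)]

lemma Mmat_herm (d : ℕ) (ξ : ℕ → ℝ) : (Mmat d ξ).conjTranspose = Mmat d ξ := by
  ext i j
  fin_cases i <;> fin_cases j <;>
    simp [Mmat, Matrix.conjTranspose_apply, Complex.ext_iff]

lemma sum_Icc_eq_one {d : ℕ} (hd : 3 ≤ d) {ξ : ℕ → ℝ} (hξ : SectionConstraints d ξ) :
    ∑ k ∈ Finset.Icc 1 (d - 1), ξ k = 1 := by
  obtain ⟨h12, hrest⟩ := hξ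
  have hset : Finset.Icc 1 (d - 1) = insert 1 (insert 2 (Finset.Icc 3 (d - 1))) := by
    ext x
    simp only [Finset.mem_Icc, Finset.mem_insert]
    omega
  rw [hset, Finset.sum_insert (by simp), Finset.sum_insert (by simp)]
  have : ∑ k ∈ Finset.Icc 3 (d - 1), ξ k = ∑ k ∈ Finset.Icc 3 (d - 1), (-1 : ℝ) :=
    Finset.sum_congr rfl (fun x hx => by
      rw [Finset.mem_Icc] at hx; exact hrest x hx.1 hx.2)
  rw [this, Finset.sum_const, Nat.card_Icc]
  have h3 : d - 1 + 1 - 3 = d - 3 := by omega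
  rw [h3]
  have : ((d - 3 : ℕ) : ℝ) = (d : ℝ) - 3 := by
    push_cast [Nat.cast_sub (by omega : 3 ≤ d)]; ring
  rw [nsmul_eq_mul, this]
  linarith

lemma rho_eq_blk {d : ℕ} (hd : 3 ≤ d) {ξ : ℕ → ℝ} (hξ : SectionConstraints d ξ) :
    rho d ξ = blk d (Mmat d ξ) := by
  ext i j
  simp only [rho, blk]
  by_cases hi : (i : ℕ) < 2
  · by_cases hj : (j : ℕ) < 2
    · rw [dif_pos hi, dif_pos hj]
      rcases (show (i : ℕ) = 0 ∨ (i : ℕ) = 1 by omega) with hiv | hiv <;>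
        rcases (show (j : ℕ) = 0 ∨ (j : ℕ) = 1 by omega) with hjv | hjv
      · have hij : i = j := Fin.ext (by omega)
        have : (⟨(i : ℕ), hi⟩ : Fin 2) = 0 := by simp [Fin.ext_iff, hiv]
        have h2 : (⟨(j : ℕ), hj⟩ : Fin 2) = 0 := by simp [Fin.ext_iff, hjv]
        rw [if_pos hij, if_neg (by omega), this, h2, hiv]
        simp [Mmat]
      · have hij : ¬ i = j := fun h => by rw [h] at hiv; omega
        have : (⟨(i : ℕ), hi⟩ : Fin 2) = 0 := by simp [Fin.ext_iff, hiv]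
        have h2 : (⟨(j : ℕ), hj⟩ : Fin 2) = 1 := by simp [Fin.ext_iff, hjv]
        rw [if_neg hij, if_pos (⟨hiv, hjv⟩ : _ ∧ _), this, h2]
        simp [Mmat]
      · have hij : ¬ i = j := fun h => by rw [h] at hiv; omega
        have : (⟨(i : ℕ), hi⟩ : Fin 2) = 1 := by simp [Fin.ext_iff, hiv]
        have h2 : (⟨(j : ℕ), hj⟩ : Fin 2) = 0 := by simp [Fin.ext_iff, hjv]
        rw [if_neg hij, if_neg (by omega), if_pos (⟨hiv, hjv⟩ : _ ∧ _), this, h2]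
        simp [Mmat]
      · have hij : i = j := Fin.ext (by omega)
        have : (⟨(i : ℕ), hi⟩ : Fin 2) = 1 := by simp [Fin.ext_iff, hiv]
        have h2 : (⟨(j : ℕ), hj⟩ : Fin 2) = 1 := by simp [Fin.ext_iff, hjv]
        rw [if_pos hij, if_neg (by omega), this, h2, hiv]
        simp [Mmat]
    · rw [dif_pos hi, dif_neg hj]
      rw [if_neg (fun h => hj (by rw [← h]; exact hi)), if_neg (by omega), if_neg (by omega)]
  · rw [dif_neg hi]
    by_cases hij : i = j
    · rw [if_pos hij]
      by_cases hlast : (i : ℕ) = d - 1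
      · rw [if_pos hlast, sum_Icc_eq_one hd hξ]
        simp
      · rw [if_neg hlast]
        have hji : ξ ((i : ℕ) + 1) = -1 := hξ.2 _ (by omega) (by have := i.isLt; omega)
        rw [hji]
        simp
    · rw [if_neg hij, if_neg (by omega), if_neg (by omega)]

lemma prodsq (s t : ℝ) :
    (((s : ℂ) - Complex.I * t) / 2) * (((s : ℂ) + Complex.I * t) / 2) =
    (((s ^ 2 + t ^ 2) / 4 : ℝ) : ℂ) := by
  push_cast
  ring_nf
  rw [Complex.I_sq]
  ring

/-- Cayley–Hamilton for the 2×2 block under the section constraints. -/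
lemma Mmat_sq {d : ℕ} (hd : 3 ≤ d) {ξ : ℕ → ℝ} (hξ : SectionConstraints d ξ) :
    Mmat d ξ * Mmat d ξ = Mmat d ξ - (lam1 d ξ * lam2 d ξ) • (1 : Matrix (Fin 2) (Fin 2) ℂ) := by
  have hd0 : (d : ℝ) ≠ 0 := by
    exact_mod_cast (Nat.pos_of_ne_zero (by omega)).ne'
  have hξ2 : ξ 2 = (d : ℝ) - 2 - ξ 1 := by linarith [hξ.1]
  have hr2 : rParam d ξ ^ 2 = (ξ 1 - ξ 2) ^ 2 / (d : ℝ) ^ 2 + ξ d ^ 2 + ξ (d + 1) ^ 2 :=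
    Real.sq_sqrt (by positivity)
  have hm : lam1 d ξ * lam2 d ξ =
      ((ξ 1 + 1) / d) * ((ξ 2 + 1) / d) - (ξ d ^ 2 + ξ (d + 1) ^ 2) / 4 := by
    have h1 : lam1 d ξ * lam2 d ξ =
        ((ξ 1 + ξ 2 + 2) / (2 * d)) ^ 2 - rParam d ξ ^ 2 / 4 := by
      unfold lam1 lam2; ring
    rw [h1, hr2, hξ2]
    field_simp
    ring
  set m : ℝ := lam1 d ξ * lam2 d ξ with hmdef
  have key1 : (ξ 1 + 1)/d * ((ξ 1 + 1)/d) + (ξ d^2 + ξ (d+1)^2)/4 = (ξ 1 + 1)/d - m := by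
    rw [hm, hξ2]; field_simp; ring
  have key2 : (ξ 2 + 1)/d * ((ξ 2 + 1)/d) + (ξ d^2 + ξ (d+1)^2)/4 = (ξ 2 + 1)/d - m := by
    rw [hm, hξ2]; field_simp; ring
  have hab : (ξ 1 + 1) / (d : ℝ) + (ξ 2 + 1) / d = 1 := by
    rw [hξ2]; field_simp; ring
  have keyC1 : (((ξ 1 : ℝ) : ℂ) + 1) / (d : ℂ) * ((((ξ 1 : ℝ) : ℂ) + 1) / (d : ℂ)) +
      (((ξ d : ℝ) : ℂ) ^ 2 + ((ξ (d+1) : ℝ) : ℂ) ^ 2) / 4 =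
      (((ξ 1 : ℝ) : ℂ) + 1) / (d : ℂ) - ((m : ℝ) : ℂ) := by exact_mod_cast key1
  have keyC2 : (((ξ 2 : ℝ) : ℂ) + 1) / (d : ℂ) * ((((ξ 2 : ℝ) : ℂ) + 1) / (d : ℂ)) +
      (((ξ d : ℝ) : ℂ) ^ 2 + ((ξ (d+1) : ℝ) : ℂ) ^ 2) / 4 =
      (((ξ 2 : ℝ) : ℂ) + 1) / (d : ℂ) - ((m : ℝ) : ℂ) := by exact_mod_cast key2
  have habC : (((ξ 1 : ℝ) : ℂ) + 1) / (d : ℂ) + (((ξ 2 : ℝ) : ℂ) + 1) / (d : ℂ) = 1 := by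
    exact_mod_cast hab
  ext i j
  fin_cases i <;> fin_cases j <;>
    simp [Mmat, Matrix.mul_apply, Fin.sum_univ_two, Matrix.one_apply, Complex.real_smul]
  · linear_combination keyC1 + (-(((ξ (d+1) : ℝ) : ℂ)) ^ 2 / 4) * Complex.I_sq
  · linear_combination (((ξ d : ℝ) : ℂ) - Complex.I * ((ξ (d+1) : ℝ) : ℂ)) / 2 * habC
  · linear_combination (((ξ d : ℝ) : ℂ) + Complex.I * ((ξ (d+1) : ℝ) : ℂ)) / 2 * habC
  · linear_combination keyC2 + (-(((ξ (d+1) : ℝ) : ℂ)) ^ 2 / 4) * Complex.I_sq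

set_option maxHeartbeats 1000000 in
theorem trace_difference_log_formula
    (d : ℕ) (hd : 3 ≤ d) (η η' ξ : ℕ → ℝ)
    (hη : SectionConstraints d η) (hη' : SectionConstraints d η')
    (hξ : SectionConstraints d ξ)
    (hr0 : 0 < rParam d ξ) (hr1 : rParam d ξ < 1) :
    (Matrix.trace ((rho d η - rho d η') * matLog (rho d ξ))).re =
      (1 / (2 * rParam d ξ)) *
        ((η d - η' d) * ξ d + (η (d + 1) - η' (d + 1)) * ξ (d + 1) +
          4 / (d : ℝ) ^ 2 * (η 1 - η' 1) * (ξ 1 - ((d : ℝ) - 2) / 2)) *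
        Real.log (lam1 d ξ / lam2 d ξ) := by
  have hd2 : 2 ≤ d := by omega
  have hd0 : (d : ℝ) ≠ 0 := by exact_mod_cast (Nat.pos_of_ne_zero (by omega)).ne'
  have hl1 : lam1 d ξ = 1/2 + rParam d ξ/2 := by
    unfold lam1; rw [hξ.1]; field_simp; ring
  have hl2 : lam2 d ξ = 1/2 - rParam d ξ/2 := by
    unfold lam2; rw [hξ.1]; field_simp; ring
  have hl1pos : 0 < lam1 d ξ := by rw [hl1]; linarith
  have hl2pos : 0 < lam2 d ξ := by rw [hl2]; linarith
  set m : ℝ := lam1 d ξ * lam2 d ξ with hmdef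
  set M : Matrix (Fin 2) (Fin 2) ℂ := Mmat d ξ with hMdef
  have hρ : rho d ξ = blk d M := rho_eq_blk hd hξ
  have hsa : IsSelfAdjoint (rho d ξ) := by
    have h : star (blk d M) = blk d M := by
      rw [Matrix.star_eq_conjTranspose, blk_conjTranspose, hMdef, Mmat_herm]
    rw [hρ]; exact h
  have hMM : M * M = M - m • 1 := Mmat_sq hd hξ
  have hsq : rho d ξ ^ 2 = blk d (M * M) := by rw [hρ, pow_two, blk_mul hd2]
  have hcube : rho d ξ ^ 3 = rho d ξ ^ 2 - m • rho d ξ := by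
    have h1 : rho d ξ ^ 3 = blk d ((M * M) * M) := by
      rw [pow_succ, hsq, hρ, blk_mul hd2]
    have h2 : (M * M) * M = M * M - m • M := by
      nth_rewrite 1 [hMM]
      rw [Matrix.sub_mul, Matrix.smul_mul, one_mul]
    rw [h1, h2, ← blk_sub, ← blk_smul, ← hsq, ← hρ]
  haveI : Nonempty (Fin d) := ⟨⟨0, by omega⟩⟩
  haveI hnt : Nontrivial (Matrix (Fin d) (Fin d) ℂ) := by infer_instance
  have haev : (Polynomial.aeval (rho d ξ))
      (Polynomial.X ^ 3 - Polynomial.X ^ 2 + Polynomial.C m * Polynomial.X) = 0 := by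
    simp only [map_add, map_sub, map_pow, map_mul, Polynomial.aeval_X, Polynomial.aeval_C]
    rw [← Algebra.smul_def, hcube]
    abel
  have hspec : ∀ x ∈ spectrum ℝ (rho d ξ), x = 0 ∨ x = lam1 d ξ ∨ x = lam2 d ξ := by
    intro x hx
    have hmem := spectrum.subset_polynomial_aeval (rho d ξ)
      (Polynomial.X ^ 3 - Polynomial.X ^ 2 + Polynomial.C m * Polynomial.X) ⟨x, hx, rfl⟩
    rw [haev, spectrum.zero_eq] at hmem
    simp only [Set.mem_singleton_iff] at hmem
    have heval : x ^ 3 - x ^ 2 + m * x = 0 := by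
      simpa using hmem
    have hsum : lam1 d ξ + lam2 d ξ = 1 := by rw [hl1, hl2]; ring
    have hfac : x * ((x - lam1 d ξ) * (x - lam2 d ξ)) = 0 := by
      linear_combination heval - x ^ 2 * hsum - x * hmdef
    rcases mul_eq_zero.mp hfac with h | h
    · exact Or.inl h
    rcases mul_eq_zero.mp h with h | h
    · exact Or.inr (Or.inl (by linarith [sub_eq_zero.mp h]))
    · exact Or.inr (Or.inr (sub_eq_zero.mp h))
  set L1 := Real.log (lam1 d ξ) with hL1
  set L2 := Real.log (lam2 d ξ) with hL2
  set den := lam1 d ξ * lam2 d ξ * (lam2 d ξ - lam1 d ξ) with hdendef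
  have hden : den ≠ 0 := by
    rw [hdendef, hl1, hl2]
    have : (1/2 + rParam d ξ/2) * (1/2 - rParam d ξ/2) * ((1/2 - rParam d ξ/2) - (1/2 + rParam d ξ/2)) ≠ 0 := by
      apply mul_ne_zero (mul_ne_zero (by linarith) (by linarith))
      intro h; nlinarith
    exact this
  set c := (L1 * lam2 d ξ ^ 2 - L2 * lam1 d ξ ^ 2) / den with hcdef
  set e := (lam1 d ξ * L2 - lam2 d ξ * L1) / den with hedef
  have hc1 : c * lam1 d ξ + e * lam1 d ξ ^ 2 = L1 := by
    rw [hcdef, hedef, hdendef]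
    have h1 : lam1 d ξ ≠ 0 := hl1pos.ne'
    have h2 : lam2 d ξ ≠ 0 := hl2pos.ne'
    have h3 : lam2 d ξ - lam1 d ξ ≠ 0 := by rw [hl1, hl2]; intro h; nlinarith
    field_simp
    ring
  have hc2 : c * lam2 d ξ + e * lam2 d ξ ^ 2 = L2 := by
    rw [hcdef, hedef, hdendef]
    have h1 : lam1 d ξ ≠ 0 := hl1pos.ne'
    have h2 : lam2 d ξ ≠ 0 := hl2pos.ne'
    have h3 : lam2 d ξ - lam1 d ξ ≠ 0 := by rw [hl1, hl2]; intro h; nlinarith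
    field_simp
    ring
  have hlog : matLog (rho d ξ) = c • rho d ξ + e • rho d ξ ^ 2 := by
    have heq : (spectrum ℝ (rho d ξ)).EqOn Real.log (fun x => c * x + e * x ^ 2) := by
      intro x hx
      rcases hspec x hx with rfl | rfl | rfl
      · simp
      · exact (hc1.symm : _)
      · exact (hc2.symm : _)
    rw [matLog, cfc_congr heq,
      cfc_add (rho d ξ) (fun x => c * x) (fun x => e * x ^ 2) (by fun_prop) (by fun_prop),
      cfc_const_mul c (fun x : ℝ => x) (rho d ξ) (by fun_prop),
      cfc_const_mul e (fun x : ℝ => x ^ 2) (rho d ξ) (by fun_prop),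
      cfc_id' ℝ (rho d ξ), cfc_pow_id (rho d ξ) 2]
  set N : Matrix (Fin 2) (Fin 2) ℂ := Mmat d η - Mmat d η' with hNdef
  have hΔ : rho d η - rho d η' = blk d N := by
    rw [rho_eq_blk hd hη, rho_eq_blk hd hη', blk_sub]
  have htrN : Matrix.trace N = 0 := by
    rw [hNdef, Matrix.trace_fin_two]
    simp [Mmat]
    have hre : ((η 1 + 1)/(d:ℝ) - (η' 1 + 1)/d) + ((η 2 + 1)/d - (η' 2 + 1)/d) = 0 := by
      field_simp
      linarith [hη.1, hη'.1]
    exact_mod_cast hre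
  set TA : ℝ := ((η 1 + 1)/d - (η' 1 + 1)/d) * ((ξ 1 + 1)/d)
      + ((η 2 + 1)/d - (η' 2 + 1)/d) * ((ξ 2 + 1)/d)
      + ((η d - η' d) * ξ d + (η (d + 1) - η' (d + 1)) * ξ (d + 1))/2 with hTAdef
  have hTr1 : Matrix.trace (N * M) = ((TA : ℝ) : ℂ) := by
    rw [Matrix.trace_fin_two, hNdef, hMdef, hTAdef]
    simp [Mmat, Matrix.mul_apply, Fin.sum_univ_two, Matrix.sub_apply]
    push_cast
    linear_combination (-(((η (d+1) : ℝ) : ℂ) - ((η' (d+1) : ℝ) : ℂ)) * ((ξ (d+1) : ℝ) : ℂ) / 2) *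
      Complex.I_sq
  have hTr2 : Matrix.trace (N * (M * M)) = ((TA : ℝ) : ℂ) := by
    rw [hMM, Matrix.mul_sub, Matrix.trace_sub, Matrix.mul_smul, Matrix.trace_smul, mul_one,
      htrN, hTr1, smul_zero, sub_zero]
  -- assemble
  rw [hlog, hΔ, hsq, hρ]
  rw [Matrix.mul_add, Matrix.mul_smul, Matrix.mul_smul, Matrix.trace_add, Matrix.trace_smul,
    Matrix.trace_smul, blk_mul hd2, blk_mul hd2, trace_blk hd2, trace_blk hd2, hTr1, hTr2]
  rw [Complex.real_smul, Complex.real_smul, ← Complex.ofReal_mul, ← Complex.ofReal_mul,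
    ← Complex.ofReal_add, Complex.ofReal_re]
  -- final real computation
  have hce : c + e = (L1 - L2) / rParam d ξ := by
    have hsub : lam2 d ξ - lam1 d ξ = -(rParam d ξ) := by rw [hl1, hl2]; ring
    have hsum1 : lam1 d ξ + lam2 d ξ = 1 := by rw [hl1, hl2]; ring
    rw [hcdef, hedef, ← add_div, div_eq_div_iff hden hr0.ne', hdendef, hsub]
    linear_combination (rParam d ξ * (L1 * lam2 d ξ - L2 * lam1 d ξ)) * hsum1
  have hlogdiv : Real.log (lam1 d ξ / lam2 d ξ) = L1 - L2 :=
    Real.log_div hl1pos.ne' hl2pos.ne'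
  have hη2 : η 2 = (d : ℝ) - 2 - η 1 := by linarith [hη.1]
  have hη'2 : η' 2 = (d : ℝ) - 2 - η' 1 := by linarith [hη'.1]
  have hξ2 : ξ 2 = (d : ℝ) - 2 - ξ 1 := by linarith [hξ.1]
  have hTAval : TA = ((η d - η' d) * ξ d + (η (d + 1) - η' (d + 1)) * ξ (d + 1) +
      4 / (d : ℝ) ^ 2 * (η 1 - η' 1) * (ξ 1 - ((d : ℝ) - 2) / 2)) / 2 := by
    rw [hTAdef, hη2, hη'2, hξ2]
    field_simp
    ring
  rw [hlogdiv, show c * TA + e * TA = (c + e) * TA from by ring, hce, hTAval]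
  field_simp
end

section
/- Let d ≥ 3 and let ξ ∈ ℝ^{d+1} satisfy the section constraints. Then ρ(ξ) is positive semidefinite if and only if r(ξ) ≤ 1. (Thus the density matrices of the constrained section form the solid ellipsoid r(ξ) ≤ 1, and the points with 0 ≤ r(ξ) < 1 are exactly the non-pure states of the section.) -/
open scoped ComplexOrder

/-! ### Auxiliary lemmas -/

lemma aux_sum_eq_one (d : ℕ) (hd : 3 ≤ d) (ξ : ℕ → ℝ) (hξ : SectionConstraints d ξ) :
    ∑ k ∈ Finset.Icc 1 (d - 1), ξ k = 1 := by
  have hset : Finset.Icc 1 (d-1) = insert 1 (insert 2 (Finset.Icc 3 (d-1))) := by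
    ext k; simp [Finset.mem_Icc]; omega
  have h3 : ∑ k ∈ Finset.Icc 3 (d-1), ξ k = -((d:ℝ) - 3) := by
    rw [Finset.sum_congr rfl (fun k hk => hξ.2 k (Finset.mem_Icc.mp hk).1 (Finset.mem_Icc.mp hk).2)]
    rw [Finset.sum_const, Nat.card_Icc]
    have : d - 1 + 1 - 3 = d - 3 := by omega
    rw [this]
    rw [nsmul_eq_mul, Nat.cast_sub (by omega : 3 ≤ d)]
    ring
  rw [hset, Finset.sum_insert (by simp [Finset.mem_Icc]), Finset.sum_insert (by simp [Finset.mem_Icc])]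
  have := hξ.1
  linarith [h3]

lemma aux_row_zero (d : ℕ) (hd : 3 ≤ d) (ξ : ℕ → ℝ) (hξ : SectionConstraints d ξ)
    (i : Fin d) (hi : 2 ≤ (i:ℕ)) (j : Fin d) : rho d ξ i j = 0 := by
  by_cases hij : i = j
  · subst hij
    by_cases hlast : (i:ℕ) = d - 1
    · simp [rho, hlast, aux_sum_eq_one d hd ξ hξ]
    · have h1 : 3 ≤ (i:ℕ) + 1 := by omega
      have h2 : (i:ℕ) + 1 ≤ d - 1 := by have := i.isLt; omega
      simp [rho, hlast, hξ.2 _ h1 h2]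
  · simp only [rho, if_neg hij]
    rw [if_neg (by omega), if_neg (by omega)]

lemma aux_col_zero (d : ℕ) (ξ : ℕ → ℝ) (i : Fin d) (hi : (i:ℕ) ≤ 1)
    (j : Fin d) (hj : 2 ≤ (j:ℕ)) : rho d ξ i j = 0 := by
  have hij : ¬ i = j := by intro h; subst h; omega
  simp only [rho, if_neg hij]
  rw [if_neg (by omega), if_neg (by omega)]

lemma aux_e00 (d : ℕ) (hd : 3 ≤ d) (ξ : ℕ → ℝ) :
    rho d ξ ⟨0, by omega⟩ ⟨0, by omega⟩ = (((ξ 1 + 1) / d : ℝ) : ℂ) := by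
  simp [rho, show ¬ (0 = d - 1) by omega]

lemma aux_e11 (d : ℕ) (hd : 3 ≤ d) (ξ : ℕ → ℝ) :
    rho d ξ ⟨1, by omega⟩ ⟨1, by omega⟩ = (((ξ 2 + 1) / d : ℝ) : ℂ) := by
  simp [rho, show ¬ (1 = d - 1) by omega]

lemma aux_e01 (d : ℕ) (hd : 3 ≤ d) (ξ : ℕ → ℝ) :
    rho d ξ ⟨0, by omega⟩ ⟨1, by omega⟩ = ((ξ d : ℂ) - Complex.I * (ξ (d + 1) : ℂ)) / 2 := by
  simp [rho, Fin.ext_iff]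

lemma aux_e10 (d : ℕ) (hd : 3 ≤ d) (ξ : ℕ → ℝ) :
    rho d ξ ⟨1, by omega⟩ ⟨0, by omega⟩ = ((ξ d : ℂ) + Complex.I * (ξ (d + 1) : ℂ)) / 2 := by
  simp [rho, Fin.ext_iff]

open Matrix in
lemma aux_quadform (d : ℕ) (hd : 3 ≤ d) (ξ : ℕ → ℝ) (hξ : SectionConstraints d ξ)
    (x : Fin d → ℂ) :
    star x ⬝ᵥ (rho d ξ *ᵥ x) =
      (starRingEnd ℂ) (x ⟨0, by omega⟩) *
        (rho d ξ ⟨0, by omega⟩ ⟨0, by omega⟩ * x ⟨0, by omega⟩ +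
         rho d ξ ⟨0, by omega⟩ ⟨1, by omega⟩ * x ⟨1, by omega⟩) +
      (starRingEnd ℂ) (x ⟨1, by omega⟩) *
        (rho d ξ ⟨1, by omega⟩ ⟨0, by omega⟩ * x ⟨0, by omega⟩ +
         rho d ξ ⟨1, by omega⟩ ⟨1, by omega⟩ * x ⟨1, by omega⟩) := by
  set i0 : Fin d := ⟨0, by omega⟩
  set i1 : Fin d := ⟨1, by omega⟩
  have hne : i0 ≠ i1 := by simp [i0, i1, Fin.ext_iff]
  have hmem : ∀ k : Fin d, k ∉ ({i0, i1} : Finset (Fin d)) → 2 ≤ (k:ℕ) := by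
    intro k hk
    simp [i0, i1, Fin.ext_iff] at hk
    omega
  have hrowsum : ∀ i : Fin d, (i:ℕ) ≤ 1 →
      ∑ j, rho d ξ i j * x j = rho d ξ i i0 * x i0 + rho d ξ i i1 * x i1 := by
    intro i hi
    rw [← Finset.sum_subset (Finset.subset_univ ({i0, i1} : Finset (Fin d)))
      (fun j _ hj => by rw [aux_col_zero d ξ i hi j (hmem j hj), zero_mul])]
    rw [Finset.sum_pair hne]
  have expand : star x ⬝ᵥ (rho d ξ *ᵥ x) =
      ∑ i, (starRingEnd ℂ) (x i) * ∑ j, rho d ξ i j * x j := rfl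
  rw [expand,
    ← Finset.sum_subset (Finset.subset_univ ({i0, i1} : Finset (Fin d)))
      (fun i _ hi => by
        rw [Finset.sum_eq_zero (fun j _ => by
          rw [aux_row_zero d hd ξ hξ i (hmem i hi) j, zero_mul]), mul_zero]),
    Finset.sum_pair hne, hrowsum i0 (by simp [i0]), hrowsum i1 (by simp [i1])]

lemma aux_rho_herm (d : ℕ) (ξ : ℕ → ℝ) : (rho d ξ).IsHermitian := by
  ext i j
  rw [Matrix.conjTranspose_apply]
  by_cases hij : i = j
  · subst hij
    simp only [rho, if_pos rfl]
    split_ifs <;> simp [Complex.conj_ofReal]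
  · have hji : ¬ j = i := fun h => hij h.symm
    by_cases h01 : (i:ℕ) = 0 ∧ (j:ℕ) = 1
    · rw [show rho d ξ j i = ((ξ d : ℂ) + Complex.I * (ξ (d + 1) : ℂ)) / 2 by
        simp only [rho, if_neg hji]; rw [if_neg (by omega), if_pos (by omega)]]
      rw [show rho d ξ i j = ((ξ d : ℂ) - Complex.I * (ξ (d + 1) : ℂ)) / 2 by
        simp only [rho, if_neg hij]; rw [if_pos h01]]
      simp [map_div₀, Complex.conj_I, Complex.conj_ofReal]
      try ring
    · by_cases h10 : (i:ℕ) = 1 ∧ (j:ℕ) = 0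
      · rw [show rho d ξ j i = ((ξ d : ℂ) - Complex.I * (ξ (d + 1) : ℂ)) / 2 by
          simp only [rho, if_neg hji]; rw [if_pos (by omega)]]
        rw [show rho d ξ i j = ((ξ d : ℂ) + Complex.I * (ξ (d + 1) : ℂ)) / 2 by
          simp only [rho, if_neg hij]; rw [if_neg (by omega), if_pos h10]]
        simp [map_div₀, Complex.conj_I, Complex.conj_ofReal]
        try ring
      · rw [show rho d ξ j i = 0 by
          simp only [rho, if_neg hji]; rw [if_neg (by omega), if_neg (by omega)]]
        rw [show rho d ξ i j = 0 by
          simp only [rho, if_neg hij]; rw [if_neg (by omega), if_neg (by omega)]]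
        simp

lemma aux_quad_eval_re (a b u v : ℝ) (c0 c1 : ℂ) :
    ((starRingEnd ℂ) c0 * (((a:ℝ):ℂ) * c0 + (((u:ℂ) - Complex.I*(v:ℂ))/2) * c1)
     + (starRingEnd ℂ) c1 * ((((u:ℂ) + Complex.I*(v:ℂ))/2) * c0 + ((b:ℝ):ℂ) * c1)).re
    = a * (c0.re^2 + c0.im^2) + b * (c1.re^2 + c1.im^2)
      + u * (c0.re*c1.re + c0.im*c1.im) + v * (c0.re*c1.im - c0.im*c1.re) := by
  have h2 : ((u:ℂ) - Complex.I*(v:ℂ))/2 = ((u/2 : ℝ):ℂ) - Complex.I*((v/2:ℝ):ℂ) := by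
    push_cast; ring
  have h3 : ((u:ℂ) + Complex.I*(v:ℂ))/2 = ((u/2 : ℝ):ℂ) + Complex.I*((v/2:ℝ):ℂ) := by
    push_cast; ring
  rw [h2, h3]
  simp [Complex.add_re, Complex.mul_re, Complex.mul_im, Complex.sub_re, Complex.sub_im]
  ring

lemma aux_quad_eval_im (a b u v : ℝ) (c0 c1 : ℂ) :
    ((starRingEnd ℂ) c0 * (((a:ℝ):ℂ) * c0 + (((u:ℂ) - Complex.I*(v:ℂ))/2) * c1)
     + (starRingEnd ℂ) c1 * ((((u:ℂ) + Complex.I*(v:ℂ))/2) * c0 + ((b:ℝ):ℂ) * c1)).im = 0 := by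
  have h2 : ((u:ℂ) - Complex.I*(v:ℂ))/2 = ((u/2 : ℝ):ℂ) - Complex.I*((v/2:ℝ):ℂ) := by
    push_cast; ring
  have h3 : ((u:ℂ) + Complex.I*(v:ℂ))/2 = ((u/2 : ℝ):ℂ) + Complex.I*((v/2:ℝ):ℂ) := by
    push_cast; ring
  rw [h2, h3]
  simp [Complex.add_re, Complex.mul_re, Complex.mul_im, Complex.sub_re, Complex.sub_im]
  ring

lemma aux_psd_ineq (a b u v p q s t : ℝ) (hab : a + b = 1) (hdet : u^2+v^2 ≤ 4*a*b) :
    0 ≤ a*(p^2+q^2) + b*(s^2+t^2) + u*(p*s+q*t) + v*(p*t-q*s) := by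
  have hb' : b = 1 - a := by linarith
  subst hb'
  nlinarith [sq_nonneg (2*a*p+u*s+v*t), sq_nonneg (2*a*q+u*t-v*s),
    sq_nonneg (2*(1-a)*s+u*p-v*q), sq_nonneg (2*(1-a)*t+u*q+v*p),
    mul_nonneg (by linarith : (0:ℝ) ≤ 4*a*(1-a) - u^2 - v^2) (by positivity : (0:ℝ) ≤ p^2+q^2),
    mul_nonneg (by linarith : (0:ℝ) ≤ 4*a*(1-a) - u^2 - v^2) (by positivity : (0:ℝ) ≤ s^2+t^2)]

lemma aux_r_iff (d : ℕ) (hd : 3 ≤ d) (ξ : ℕ → ℝ) (h1 : ξ 1 + ξ 2 = (d:ℝ) - 2) :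
    (rParam d ξ ≤ 1 ↔
      ξ d ^2 + ξ (d+1) ^2 ≤ 4 * ((ξ 1 + 1)/d) * ((ξ 2 + 1)/d)) := by
  have hd0 : (0:ℝ) < d := by exact_mod_cast Nat.lt_of_lt_of_le (by norm_num) hd
  have key0 : (ξ 1 - ξ 2)^2 = (d:ℝ)^2 - 4*(ξ 1+1)*(ξ 2+1) := by
    linear_combination (ξ 1 + ξ 2 + 2 + (d:ℝ)) * h1
  have key : (ξ 1 - ξ 2)^2/(d:ℝ)^2 = 1 - 4 * ((ξ 1 + 1)/d) * ((ξ 2 + 1)/d) := by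
    rw [key0]; field_simp
  have hS : 0 ≤ (ξ 1 - ξ 2) ^ 2 / (d : ℝ) ^ 2 + ξ d ^ 2 + ξ (d + 1) ^ 2 := by positivity
  constructor
  · intro h
    have hsq := Real.sq_sqrt hS
    have hr0 := Real.sqrt_nonneg ((ξ 1 - ξ 2) ^ 2 / (d : ℝ) ^ 2 + ξ d ^ 2 + ξ (d + 1) ^ 2)
    rw [rParam] at h
    nlinarith [hsq, key]
  · intro h
    rw [rParam, Real.sqrt_le_one]
    linarith [key]

theorem rho_posSemidef_iff_r_le_one
    (d : ℕ) (hd : 3 ≤ d) (ξ : ℕ → ℝ) (hξ : SectionConstraints d ξ) :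
    (rho d ξ).PosSemidef ↔ rParam d ξ ≤ 1 := by
  have hd0 : (0:ℝ) < d := by exact_mod_cast Nat.lt_of_lt_of_le (by norm_num) hd
  have hr := aux_r_iff d hd ξ hξ.1
  have hab : (ξ 1 + 1)/(d:ℝ) + (ξ 2 + 1)/(d:ℝ) = 1 := by
    field_simp
    linarith [hξ.1]
  rw [Matrix.posSemidef_iff_dotProduct_mulVec]
  constructor
  · rintro ⟨hherm, hq⟩
    rw [hr]
    have key : ∀ c0 c1 : ℂ,
        0 ≤ ((ξ 1 + 1)/(d:ℝ)) * (c0.re^2 + c0.im^2) + ((ξ 2 + 1)/(d:ℝ)) * (c1.re^2 + c1.im^2)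
          + ξ d * (c0.re*c1.re + c0.im*c1.im) + ξ (d+1) * (c0.re*c1.im - c0.im*c1.re) := by
      intro c0 c1
      have h := hq (fun i => if i = (⟨0, by omega⟩ : Fin d) then c0
        else if i = (⟨1, by omega⟩ : Fin d) then c1 else 0)
      rw [aux_quadform d hd ξ hξ] at h
      simp only [show ((⟨0, by omega⟩:Fin d) = ⟨0, by omega⟩) = True by simp,
                 show ((⟨1, by omega⟩:Fin d) = ⟨1, by omega⟩) = True by simp,
                 show ((⟨0, by omega⟩:Fin d) = ⟨1, by omega⟩) = False by simp [Fin.ext_iff],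
                 show ((⟨1, by omega⟩:Fin d) = ⟨0, by omega⟩) = False by simp [Fin.ext_iff],
                 if_true, if_false] at h
      rw [aux_e00 d hd ξ, aux_e01 d hd ξ, aux_e10 d hd ξ, aux_e11 d hd ξ] at h
      have hre := (Complex.le_def.mp h).1
      rw [Complex.zero_re, aux_quad_eval_re] at hre
      exact hre
    have ha0 : 0 ≤ (ξ 1 + 1)/(d:ℝ) := by
      have := key 1 0
      norm_num at this
      linarith
    have hb0 : 0 ≤ (ξ 2 + 1)/(d:ℝ) := by
      have := key 0 1
      norm_num at this
      linarith
    have hA := key ⟨-(ξ d), ξ (d+1)⟩ ⟨2*((ξ 1 + 1)/(d:ℝ)), 0⟩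
    have hB := key ⟨2*((ξ 2 + 1)/(d:ℝ)), 0⟩ ⟨-(ξ d), -(ξ (d+1))⟩
    simp only [] at hA hB
    nlinarith [hA, hB, ha0, hb0, hab, sq_nonneg (ξ d), sq_nonneg (ξ (d+1))]
  · intro h
    rw [hr] at h
    have ha0 : 0 ≤ (ξ 1 + 1)/(d:ℝ) := by
      nlinarith [sq_nonneg (ξ d), sq_nonneg (ξ (d+1)), sq_nonneg ((ξ 1 + 1)/(d:ℝ))]
    refine ⟨aux_rho_herm d ξ, fun x => ?_⟩
    rw [aux_quadform d hd ξ hξ x, aux_e00 d hd ξ, aux_e01 d hd ξ, aux_e10 d hd ξ,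
      aux_e11 d hd ξ, Complex.le_def]
    constructor
    · rw [Complex.zero_re, aux_quad_eval_re]
      exact aux_psd_ineq _ _ _ _ _ _ _ _ hab h
    · rw [Complex.zero_im, aux_quad_eval_im]
end

section
/- Let d ≥ 3 and ξ ∈ ℝ^{d+1}. The matrix ρ(ξ) is positive semidefinite of rank one if and only if one of the following three mutually exclusive cases holds: (Case 1) ξ_1 = ξ_2 = ⋯ = ξ_{d−1} = −1 and ξ_d = ξ_{d+1} = 0; (Case 2) ξ_1 = ξ_2 = −1, ξ_d = ξ_{d+1} = 0, and there is an index k with 3 ≤ k ≤ d−1 such that ξ_k = d−1 and ξ_j = −1 for every j with 3 ≤ j ≤ d−1 and j ≠ k; (Case 3) ξ_1 + ξ_2 = d−2, ξ_3 = ⋯ = ξ_{d−1} = −1, and (ξ_1−ξ_2)²/d² + ξ_d² + ξ_{d+1}² = 1. -/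
open scoped ComplexOrder

open Matrix

lemma outer_psd_rank {n : Type*} [Fintype n] [DecidableEq n] (v : n → ℂ) (hv : v ≠ 0) :
    (Matrix.vecMulVec v (star v)).PosSemidef ∧ (Matrix.vecMulVec v (star v)).rank = 1 := by
  have hrow : Matrix.vecMulVec v (star v)
      = (Matrix.replicateRow Unit (star v))ᴴ * Matrix.replicateRow Unit (star v) := by
    rw [Matrix.conjTranspose_replicateRow, star_star, ← Matrix.vecMulVec_eq Unit]
  constructor
  · rw [hrow]; exact Matrix.posSemidef_conjTranspose_mul_self _
  · rw [hrow, Matrix.rank_conjTranspose_mul_self]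
    have hle : (Matrix.replicateRow Unit (star v)).rank ≤ 1 := by
      simpa using (Matrix.replicateRow Unit (star v)).rank_le_card_height
    have hne : (Matrix.replicateRow Unit (star v)).rank ≠ 0 := by
      intro h0
      apply hv
      have : LinearMap.range (Matrix.replicateRow Unit (star v)).mulVecLin = ⊥ := by
        rw [← Submodule.finrank_eq_zero (R := ℂ)]
        exact h0
      rw [LinearMap.range_eq_bot] at this
      funext i
      have := congrFun (LinearMap.congr_fun this (Pi.single i 1)) ()
      simp [Matrix.mulVecLin_apply, Matrix.replicateRow] at this
      simpa using congrArg star this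
    omega

variable {d : ℕ} {ξ : ℕ → ℝ}


lemma sum_icc_all (hd : 3 ≤ d) (h : ∀ j, 1 ≤ j → j ≤ d - 1 → ξ j = -1) :
    ∑ k ∈ Finset.Icc 1 (d - 1), ξ k = -((d : ℝ) - 1) := by
  have hc : ∑ k ∈ Finset.Icc 1 (d - 1), ξ k = ∑ k ∈ Finset.Icc 1 (d - 1), (-1 : ℝ) :=
    Finset.sum_congr rfl (fun k hk => by
      rw [Finset.mem_Icc] at hk; exact h k hk.1 hk.2)
  rw [hc, Finset.sum_const, Nat.card_Icc]
  have : d - 1 + 1 - 1 = d - 1 := by omega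
  rw [this, nsmul_eq_mul]
  have : ((d - 1 : ℕ) : ℝ) = (d : ℝ) - 1 := by
    push_cast [Nat.cast_sub (by omega : 1 ≤ d)]; ring
  rw [this]; ring

lemma sum_icc_except (hd : 3 ≤ d) (K : ℕ) (hK1 : 1 ≤ K) (hK : K ≤ d - 1)
    (h : ∀ j, 1 ≤ j → j ≤ d - 1 → j ≠ K → ξ j = -1) :
    ∑ k ∈ Finset.Icc 1 (d - 1), ξ k = ξ K - ((d : ℝ) - 2) := by
  have hKmem : K ∈ Finset.Icc 1 (d - 1) := Finset.mem_Icc.2 ⟨hK1, hK⟩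
  rw [← Finset.add_sum_erase _ _ hKmem]
  have : ∑ k ∈ (Finset.Icc 1 (d - 1)).erase K, ξ k
      = ∑ k ∈ (Finset.Icc 1 (d - 1)).erase K, (-1 : ℝ) := by
    refine Finset.sum_congr rfl (fun k hk => ?_)
    rw [Finset.mem_erase, Finset.mem_Icc] at hk
    exact h k hk.2.1 hk.2.2 hk.1
  rw [this, Finset.sum_const, Finset.card_erase_of_mem hKmem, Nat.card_Icc, nsmul_eq_mul]
  have : ((d - 1 + 1 - 1 - 1 : ℕ) : ℝ) = (d : ℝ) - 2 := by
    have h2 : d - 1 + 1 - 1 - 1 = d - 2 := by omega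
    rw [h2]; push_cast [Nat.cast_sub (by omega : 2 ≤ d)]; ring
  rw [this]; ring

lemma rho_diag_last (hd : 3 ≤ d) :
    rho d ξ ⟨d - 1, by omega⟩ ⟨d - 1, by omega⟩
      = (((1 - ∑ k ∈ Finset.Icc 1 (d - 1), ξ k) / d : ℝ) : ℂ) := by
  simp [rho]

lemma rho_diag (i : Fin d) (h : (i : ℕ) ≠ d - 1) :
    rho d ξ i i = (((ξ ((i : ℕ) + 1) + 1) / d : ℝ) : ℂ) := by
  simp [rho, h]

lemma rho_off (i j : Fin d) (hij : i ≠ j) (h : ¬((i : ℕ) = 0 ∧ (j : ℕ) = 1))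
    (h' : ¬((i : ℕ) = 1 ∧ (j : ℕ) = 0)) : rho d ξ i j = 0 := by
  simp [rho, hij, h, h']

lemma rho_01 (hd : 3 ≤ d) :
    rho d ξ ⟨0, by omega⟩ ⟨1, by omega⟩
      = ((ξ d : ℂ) - Complex.I * (ξ (d + 1) : ℂ)) / 2 := by
  have : (⟨0, by omega⟩ : Fin d) ≠ ⟨1, by omega⟩ := by simp [Fin.ext_iff]
  simp [rho, this]

lemma rho_10 (hd : 3 ≤ d) :
    rho d ξ ⟨1, by omega⟩ ⟨0, by omega⟩
      = ((ξ d : ℂ) + Complex.I * (ξ (d + 1) : ℂ)) / 2 := by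
  have : (⟨1, by omega⟩ : Fin d) ≠ ⟨0, by omega⟩ := by simp [Fin.ext_iff]
  simp [rho, this]

lemma rho_diag_last' (hd : 3 ≤ d) (i : Fin d) (hi : (i : ℕ) = d - 1) :
    rho d ξ i i = (((1 - ∑ k ∈ Finset.Icc 1 (d - 1), ξ k) / d : ℝ) : ℂ) := by
  simp [rho, hi]

lemma vecMulVec_single_apply (idx i j : Fin d) :
    vecMulVec (Pi.single idx (1 : ℂ)) (star (Pi.single idx (1 : ℂ))) i j
      = if i = idx ∧ j = idx then 1 else 0 := by
  rw [vecMulVec_apply, Pi.star_apply, Pi.single_apply, Pi.single_apply]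
  by_cases h1 : i = idx <;> by_cases h2 : j = idx <;> simp [h1, h2]

lemma eq_single_outer (hd : 3 ≤ d) (idx : Fin d)
    (hb : ξ d = 0) (hb' : ξ (d + 1) = 0)
    (hdiag : ∀ i : Fin d, rho d ξ i i = if i = idx then 1 else 0) :
    rho d ξ = vecMulVec (Pi.single idx (1 : ℂ)) (star (Pi.single idx (1 : ℂ))) := by
  ext i j
  rw [vecMulVec_single_apply]
  by_cases hij : i = j
  · subst hij
    rw [hdiag]
    by_cases h1 : i = idx <;> simp [h1]
  · have hne : ¬(i = idx ∧ j = idx) := fun ⟨a, b⟩ => hij (a.trans b.symm)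
    rw [if_neg hne]
    by_cases h01 : (i : ℕ) = 0 ∧ (j : ℕ) = 1
    · have : i = (⟨0, by omega⟩ : Fin d) := Fin.ext h01.1
      have hj : j = (⟨1, by omega⟩ : Fin d) := Fin.ext h01.2
      rw [this, hj, rho_01 hd, hb, hb']; simp
    · by_cases h10 : (i : ℕ) = 1 ∧ (j : ℕ) = 0
      · have : i = (⟨1, by omega⟩ : Fin d) := Fin.ext h10.1
        have hj : j = (⟨0, by omega⟩ : Fin d) := Fin.ext h10.2
        rw [this, hj, rho_10 hd, hb, hb']; simp
      · exact rho_off i j hij h01 h10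

lemma case1_eq (hd : 3 ≤ d) (h : ∀ j, 1 ≤ j → j ≤ d - 1 → ξ j = -1)
    (hb : ξ d = 0) (hb' : ξ (d + 1) = 0) :
    rho d ξ = vecMulVec (Pi.single (⟨d - 1, by omega⟩ : Fin d) (1 : ℂ))
      (star (Pi.single (⟨d - 1, by omega⟩ : Fin d) (1 : ℂ))) := by
  refine eq_single_outer hd _ hb hb' (fun i => ?_)
  by_cases hi : (i : ℕ) = d - 1
  · have hidx : i = (⟨d - 1, by omega⟩ : Fin d) := Fin.ext hi
    rw [hidx, if_pos rfl, rho_diag_last hd, sum_icc_all hd h]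
    have hd0 : (d : ℝ) ≠ 0 := by positivity
    rw [show (1 - -((d:ℝ) - 1)) / d = 1 by field_simp; ring]
    simp
  · have hidx : ¬ i = (⟨d - 1, by omega⟩ : Fin d) := fun he => hi (by rw [he])
    rw [if_neg hidx, rho_diag i hi]
    have : ξ ((i : ℕ) + 1) = -1 := h _ (by omega) (by omega)
    rw [this]; simp

lemma case2_eq (hd : 3 ≤ d) (h1 : ξ 1 = -1) (h2 : ξ 2 = -1)
    (hb : ξ d = 0) (hb' : ξ (d + 1) = 0) (K : ℕ) (hK3 : 3 ≤ K) (hK : K ≤ d - 1)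
    (hKv : ξ K = (d : ℝ) - 1) (h : ∀ j, 3 ≤ j → j ≤ d - 1 → j ≠ K → ξ j = -1) :
    rho d ξ = vecMulVec (Pi.single (⟨K - 1, by omega⟩ : Fin d) (1 : ℂ))
      (star (Pi.single (⟨K - 1, by omega⟩ : Fin d) (1 : ℂ))) := by
  have hall : ∀ j, 1 ≤ j → j ≤ d - 1 → j ≠ K → ξ j = -1 := by
    intro j hj1 hjd hjK
    rcases Nat.lt_or_ge j 3 with hj3 | hj3
    · interval_cases j
      · exact h1
      · exact h2
    · exact h j hj3 hjd hjK
  refine eq_single_outer hd _ hb hb' (fun i => ?_)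
  by_cases hi : (i : ℕ) = d - 1
  · have hidx : ¬ i = (⟨K - 1, by omega⟩ : Fin d) := by
      intro he
      have : (i : ℕ) = K - 1 := by rw [he]
      omega
    rw [if_neg hidx, rho_diag_last' hd i hi,
      sum_icc_except hd K (by omega) hK hall, hKv]
    rw [show (1 - ((d:ℝ) - 1 - ((d:ℝ) - 2))) / d = 0 by ring]
    simp
  · by_cases hiK : (i : ℕ) = K - 1
    · have hidx : i = (⟨K - 1, by omega⟩ : Fin d) := Fin.ext hiK
      rw [if_pos hidx, rho_diag i hi, hiK, show K - 1 + 1 = K by omega, hKv]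
      have hd0 : (d : ℝ) ≠ 0 := by positivity
      rw [show ((d:ℝ) - 1 + 1) / d = 1 by field_simp; ring]
      simp
    · have hidx : ¬ i = (⟨K - 1, by omega⟩ : Fin d) := fun he => hiK (by rw [he])
      rw [if_neg hidx, rho_diag i hi]
      have : ξ ((i : ℕ) + 1) = -1 := hall _ (by omega) (by omega) (by omega)
      rw [this]; simp

lemma sum_icc_mid (hd : 3 ≤ d) (h : ∀ j, 3 ≤ j → j ≤ d - 1 → ξ j = -1) :
    ∑ k ∈ Finset.Icc 1 (d - 1), ξ k = ξ 1 + ξ 2 - ((d : ℝ) - 3) := by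
  have h1 : (1 : ℕ) ∈ Finset.Icc 1 (d - 1) := Finset.mem_Icc.2 ⟨le_refl _, by omega⟩
  have h2 : (2 : ℕ) ∈ (Finset.Icc 1 (d - 1)).erase 1 := by
    rw [Finset.mem_erase, Finset.mem_Icc]; omega
  rw [← Finset.add_sum_erase _ _ h1, ← Finset.add_sum_erase _ _ h2]
  have hc : ∑ k ∈ ((Finset.Icc 1 (d - 1)).erase 1).erase 2, ξ k
      = ∑ k ∈ ((Finset.Icc 1 (d - 1)).erase 1).erase 2, (-1 : ℝ) := by
    refine Finset.sum_congr rfl (fun k hk => ?_)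
    simp only [Finset.mem_erase, Finset.mem_Icc] at hk
    exact h k (by omega) hk.2.2.2
  rw [hc, Finset.sum_const, Finset.card_erase_of_mem h2,
    Finset.card_erase_of_mem h1, Nat.card_Icc, nsmul_eq_mul]
  have : ((d - 1 + 1 - 1 - 1 - 1 : ℕ) : ℝ) = (d : ℝ) - 3 := by
    have h2 : d - 1 + 1 - 1 - 1 - 1 = d - 3 := by omega
    rw [h2]; push_cast [Nat.cast_sub (by omega : 3 ≤ d)]; ring
  rw [this]; ring

lemma case3_eq (hd : 3 ≤ d) (hs : ξ 1 + ξ 2 = (d : ℝ) - 2)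
    (h : ∀ j, 3 ≤ j → j ≤ d - 1 → ξ j = -1)
    (heq : (ξ 1 - ξ 2) ^ 2 / (d : ℝ) ^ 2 + ξ d ^ 2 + ξ (d + 1) ^ 2 = 1) :
    ∃ v : Fin d → ℂ, v ≠ 0 ∧ rho d ξ = vecMulVec v (star v) := by
  have hd0 : (d : ℝ) ≠ 0 := by positivity
  have hdpos : (0 : ℝ) < d := by positivity
  set α := ξ 1 + 1 with hα_def
  set β := ξ 2 + 1 with hβ_def
  set r := ξ d ^ 2 + ξ (d + 1) ^ 2 with hr_def
  have hsum : α + β = d := by rw [hα_def, hβ_def]; linarith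
  have hprod : 4 * (α * β) = (d : ℝ) ^ 2 * r := by
    have h1 : (ξ 1 - ξ 2) ^ 2 = (d : ℝ) ^ 2 - 4 * (α * β) := by
      have : ξ 1 - ξ 2 = α - β := by rw [hα_def, hβ_def]; ring
      rw [this, show (α - β)^2 = (α + β)^2 - 4*(α*β) by ring, hsum]
    have h2 : ((d : ℝ) ^ 2 - 4 * (α * β)) / (d : ℝ) ^ 2 + r = 1 := by
      rw [← h1]; rw [hr_def]; linarith [heq]
    field_simp at h2
    linarith
  have hrpos : 0 ≤ r := by rw [hr_def]; positivity
  have hαpos : 0 ≤ α := by nlinarith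
  have hβpos : 0 ≤ β := by nlinarith
  have hsum1 : ∑ k ∈ Finset.Icc 1 (d - 1), ξ k = 1 := by
    rw [sum_icc_mid hd h, hα_def, hβ_def] at *
    linarith
  by_cases hα0 : α = 0
  · -- v = e_1
    have hβd : β = d := by linarith
    have hr0 : r = 0 := by
      have hz : (d : ℝ) ^ 2 * r = 0 := by rw [← hprod, hα0]; ring
      have hd2 : (0 : ℝ) < (d : ℝ) ^ 2 := by positivity
      rcases mul_eq_zero.mp hz with h' | h'
      · exact absurd h' (ne_of_gt hd2)
      · exact h'
    have hξd : ξ d = 0 := by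
      have h1 : ξ d ^ 2 = 0 := by
        have := sq_nonneg (ξ d); have := sq_nonneg (ξ (d + 1)); rw [hr_def] at hr0; linarith
      exact pow_eq_zero_iff (by norm_num) |>.mp h1
    have hξd' : ξ (d + 1) = 0 := by
      have h1 : ξ (d + 1) ^ 2 = 0 := by
        have := sq_nonneg (ξ d); have := sq_nonneg (ξ (d + 1)); rw [hr_def] at hr0; linarith
      exact pow_eq_zero_iff (by norm_num) |>.mp h1
    refine ⟨Pi.single (⟨1, by omega⟩ : Fin d) (1 : ℂ), ?_, ?_⟩
    · intro h0
      have := congrFun h0 (⟨1, by omega⟩ : Fin d)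
      simp at this
    · refine eq_single_outer hd _ hξd hξd' (fun i => ?_)
      by_cases hi : (i : ℕ) = d - 1
      · have hidx : ¬ i = (⟨1, by omega⟩ : Fin d) := by
          intro he; have : (i : ℕ) = 1 := by rw [he]
          omega
        rw [if_neg hidx, rho_diag_last' hd i hi, hsum1]
        simp
      · by_cases hi1 : (i : ℕ) = 1
        · have hidx : i = (⟨1, by omega⟩ : Fin d) := Fin.ext hi1
          rw [if_pos hidx, rho_diag i hi, hi1]
          have : ξ 2 + 1 = (d : ℝ) := by rw [← hβ_def]; exact hβd
          rw [show (1 : ℕ) + 1 = 2 by rfl, this]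
          field_simp
          simp
        · have hidx : ¬ i = (⟨1, by omega⟩ : Fin d) := fun he => hi1 (by rw [he])
          rw [if_neg hidx, rho_diag i hi]
          by_cases hi0 : (i : ℕ) = 0
          · rw [hi0]
            have : ξ 1 + 1 = 0 := hα0
            rw [show (0 : ℕ) + 1 = 1 by rfl, this]; simp
          · have : ξ ((i : ℕ) + 1) = -1 := h _ (by omega) (by omega)
            rw [this]; simp
  · have hαpos' : 0 < α := lt_of_le_of_ne hαpos (Ne.symm hα0)
    obtain ⟨sa, hsa_def⟩ : ∃ s : ℝ, s = Real.sqrt (α / d) := ⟨_, rfl⟩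
    have hsapos : 0 < sa := hsa_def ▸ Real.sqrt_pos.2 (by positivity)
    have hsa2 : (sa : ℝ) * sa = α / d := by
      rw [hsa_def]; exact Real.mul_self_sqrt (by positivity)
    obtain ⟨b, hb_def⟩ : ∃ b : ℂ, b = ((ξ d : ℂ) - Complex.I * (ξ (d + 1) : ℂ)) / 2 := ⟨_, rfl⟩
    have hbconj : (starRingEnd ℂ) b = ((ξ d : ℂ) + Complex.I * (ξ (d + 1) : ℂ)) / 2 := by
      rw [hb_def, map_div₀, map_sub, _root_.map_mul, Complex.conj_I, Complex.conj_ofReal,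
        Complex.conj_ofReal, map_ofNat]
      ring
    have hbb : b * (starRingEnd ℂ) b = ((r / 4 : ℝ) : ℂ) := by
      rw [hbconj, hb_def, hr_def]
      push_cast
      ring_nf
      rw [Complex.I_sq]
      ring
    obtain ⟨v, hv_def⟩ : ∃ v : Fin d → ℂ, v = fun i : Fin d =>
        if (i : ℕ) = 0 then (sa : ℂ)
        else if (i : ℕ) = 1 then (starRingEnd ℂ) b / (sa : ℂ) else 0 := ⟨_, rfl⟩
    have hsaC : ((sa : ℂ)) ≠ 0 := Complex.ofReal_ne_zero.2 (ne_of_gt hsapos)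
    have hv0' : ∀ i : Fin d, (i : ℕ) = 0 → v i = (sa : ℂ) := by
      intro i hi; simp [hv_def, hi]
    have hv1' : ∀ i : Fin d, (i : ℕ) = 1 → v i = (starRingEnd ℂ) b / (sa : ℂ) := by
      intro i hi; simp [hv_def, hi]
    have hvz : ∀ i : Fin d, (i : ℕ) ≠ 0 → (i : ℕ) ≠ 1 → v i = 0 := by
      intro i h0 h1; simp only [hv_def]; rw [if_neg h0, if_neg h1]
    refine ⟨v, ?_, ?_⟩
    · intro h0
      have := congrFun h0 (⟨0, by omega⟩ : Fin d)
      rw [hv0' _ rfl] at this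
      exact hsaC this
    · ext i j
      rw [Matrix.vecMulVec_apply, Pi.star_apply]
      by_cases hij : i = j
      · subst hij
        by_cases hi : (i : ℕ) = d - 1
        · rw [rho_diag_last' hd i hi, hsum1, hvz i (by omega) (by omega)]
          simp
        · by_cases hi0 : (i : ℕ) = 0
          · rw [rho_diag i hi, hi0, hv0' i hi0, show (0 : ℕ) + 1 = 1 by rfl,
              RCLike.star_def, Complex.conj_ofReal, ← Complex.ofReal_mul, hsa2, hα_def]
          · by_cases hi1 : (i : ℕ) = 1
            · rw [rho_diag i hi, hi1, show (1 : ℕ) + 1 = 2 by rfl, hv1' i hi1,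
                RCLike.star_def]
              have prod_div : ((starRingEnd ℂ) b / (sa : ℂ)) *
                  (starRingEnd ℂ) ((starRingEnd ℂ) b / (sa : ℂ))
                  = (b * (starRingEnd ℂ) b) / (((sa : ℝ) * sa : ℝ) : ℂ) := by
                rw [map_div₀, Complex.conj_conj, Complex.conj_ofReal]
                push_cast
                ring
              rw [prod_div, hbb, hsa2,
                show ((r / 4 : ℝ) : ℂ) / ((α / d : ℝ) : ℂ)
                  = (((r / 4) / (α / d) : ℝ) : ℂ) by push_cast; ring]
              congr 1
              rw [hβ_def] at *
              field_simp
              nlinarith [hprod]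
            · rw [rho_diag i hi]
              have : ξ ((i : ℕ) + 1) = -1 := h _ (by omega) (by omega)
              rw [this, hvz i hi0 hi1]
              simp
      · by_cases h01 : (i : ℕ) = 0 ∧ (j : ℕ) = 1
        · have hieq : i = (⟨0, by omega⟩ : Fin d) := Fin.ext h01.1
          have hjeq : j = (⟨1, by omega⟩ : Fin d) := Fin.ext h01.2
          rw [hieq, hjeq, rho_01 hd, hv0' _ rfl, hv1' _ rfl, RCLike.star_def,
            map_div₀, Complex.conj_conj, Complex.conj_ofReal,
            mul_comm ((sa : ℂ)) (b / (sa : ℂ)), div_mul_cancel₀ _ hsaC, hb_def]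
        · by_cases h10 : (i : ℕ) = 1 ∧ (j : ℕ) = 0
          · have hieq : i = (⟨1, by omega⟩ : Fin d) := Fin.ext h10.1
            have hjeq : j = (⟨0, by omega⟩ : Fin d) := Fin.ext h10.2
            rw [hieq, hjeq, rho_10 hd, hv1' _ rfl, hv0' _ rfl, RCLike.star_def,
              Complex.conj_ofReal, div_mul_cancel₀ _ hsaC, hbconj]
          · rw [rho_off i j hij h01 h10]
            have : v i = 0 ∨ v j = 0 := by
              rcases Nat.lt_or_ge (i : ℕ) 2 with hi2 | hi2
              · rcases Nat.lt_or_ge (j : ℕ) 2 with hj2 | hj2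
                · exfalso
                  have hine : (i : ℕ) ≠ (j : ℕ) := fun he => hij (Fin.ext he)
                  omega
                · right; exact hvz j (by omega) (by omega)
              · left; exact hvz i (by omega) (by omega)
            rcases this with h0 | h0 <;> rw [h0] <;> simp

lemma minor_vanish {n : Type*} [Fintype n] [DecidableEq n] (A : Matrix n n ℂ)
    (h : A.rank ≤ 1) (i j k l : n) : A i k * A j l = A i l * A j k := by
  have hW : Module.finrank ℂ (LinearMap.range A.mulVecLin) ≤ 1 := h
  rw [finrank_le_one_iff] at hW
  obtain ⟨v, hv⟩ := hW
  obtain ⟨a, ha⟩ := hv ⟨A.mulVecLin (Pi.single k 1), LinearMap.mem_range_self _ _⟩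
  obtain ⟨b, hb⟩ := hv ⟨A.mulVecLin (Pi.single l 1), LinearMap.mem_range_self _ _⟩
  rw [Subtype.ext_iff] at ha hb
  have ha' : ∀ r, a * (v : n → ℂ) r = A r k := by
    intro r
    have := congrFun ha r
    simpa [Matrix.mulVecLin_apply] using this
  have hb' : ∀ r, b * (v : n → ℂ) r = A r l := by
    intro r
    have := congrFun hb r
    simpa [Matrix.mulVecLin_apply] using this
  rw [← ha' i, ← hb' j, ← hb' i, ← ha' j]
  ring

lemma rho_forward (hd : 3 ≤ d) (hr : (rho d ξ).rank ≤ 1) :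
    ((∀ j : ℕ, 1 ≤ j → j ≤ d - 1 → ξ j = -1) ∧ ξ d = 0 ∧ ξ (d + 1) = 0) ∨
      (ξ 1 = -1 ∧ ξ 2 = -1 ∧ ξ d = 0 ∧ ξ (d + 1) = 0 ∧
        ∃ k : ℕ, 3 ≤ k ∧ k ≤ d - 1 ∧ ξ k = (d : ℝ) - 1 ∧
          ∀ j : ℕ, 3 ≤ j → j ≤ d - 1 → j ≠ k → ξ j = -1) ∨
      (ξ 1 + ξ 2 = (d : ℝ) - 2 ∧ (∀ j : ℕ, 3 ≤ j → j ≤ d - 1 → ξ j = -1) ∧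
        (ξ 1 - ξ 2) ^ 2 / (d : ℝ) ^ 2 + ξ d ^ 2 + ξ (d + 1) ^ 2 = 1) := by
  have hd0 : (d : ℝ) ≠ 0 := by positivity
  have hm : ∀ i j : Fin d, rho d ξ i i * rho d ξ j j = rho d ξ i j * rho d ξ j i :=
    fun i j => minor_vanish _ hr i j i j
  have key : ∀ i j : Fin d, i ≠ j → ¬((i : ℕ) = 0 ∧ (j : ℕ) = 1) →
      ¬((i : ℕ) = 1 ∧ (j : ℕ) = 0) →
      rho d ξ i i * rho d ξ j j = 0 := by
    intro i j h1 h2 h3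
    rw [hm i j, rho_off i j h1 h2 h3, rho_off j i (Ne.symm h1) (by tauto) (by tauto)]
    ring
  -- product of two middle diagonal entries
  have keyR : ∀ p q : ℕ, 1 ≤ p → p ≤ d - 1 → 1 ≤ q → q ≤ d - 1 → p ≠ q →
      ¬(p = 1 ∧ q = 2) → ¬(p = 2 ∧ q = 1) → (ξ p + 1) * (ξ q + 1) = 0 := by
    intro p q hp1 hp hq1 hq hpq hn1 hn2
    have hkey := key ⟨p - 1, by omega⟩ ⟨q - 1, by omega⟩
      (by simp [Fin.ext_iff]; omega) (by simp; omega) (by simp; omega)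
    rw [rho_diag _ (by simp; omega), rho_diag _ (by simp; omega)] at hkey
    simp only [show p - 1 + 1 = p by omega, show q - 1 + 1 = q by omega] at hkey
    have : ((ξ p + 1) / d) * ((ξ q + 1) / d) = 0 := by exact_mod_cast hkey
    have h2 : (ξ p + 1) * (ξ q + 1) / ((d : ℝ) * d) = 0 := by
      rw [← this]; ring
    have := (div_eq_zero_iff.mp h2).resolve_right (by positivity)
    exact this
  have keyLast : ∀ p : ℕ, 1 ≤ p → p ≤ d - 1 →
      (ξ p + 1) * (1 - ∑ k ∈ Finset.Icc 1 (d - 1), ξ k) = 0 := by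
    intro p hp1 hp
    have hkey := key ⟨p - 1, by omega⟩ ⟨d - 1, by omega⟩
      (by simp [Fin.ext_iff]; omega) (by simp; omega) (by simp; omega)
    rw [rho_diag _ (by simp; omega), rho_diag_last hd] at hkey
    simp only [show p - 1 + 1 = p by omega] at hkey
    have : ((ξ p + 1) / d) * ((1 - ∑ k ∈ Finset.Icc 1 (d - 1), ξ k) / d) = 0 := by
      exact_mod_cast hkey
    have h2 : (ξ p + 1) * (1 - ∑ k ∈ Finset.Icc 1 (d - 1), ξ k) / ((d : ℝ) * d) = 0 := by
      rw [← this]; ring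
    exact (div_eq_zero_iff.mp h2).resolve_right (by positivity)
  have key01 : (ξ 1 + 1) * (ξ 2 + 1) / (d : ℝ) ^ 2 = (ξ d ^ 2 + ξ (d + 1) ^ 2) / 4 := by
    have hkey := hm ⟨0, by omega⟩ ⟨1, by omega⟩
    rw [rho_diag _ (by simp; omega), rho_diag _ (by simp; omega), rho_01 hd, rho_10 hd] at hkey
    simp only [Fin.val_mk] at hkey
    norm_num at hkey
    have hprod : ((ξ d : ℂ) - Complex.I * (ξ (d + 1) : ℂ)) / 2 *
        (((ξ d : ℂ) + Complex.I * (ξ (d + 1) : ℂ)) / 2)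
        = (((ξ d ^ 2 + ξ (d + 1) ^ 2) / 4 : ℝ) : ℂ) := by
      push_cast
      ring_nf
      rw [Complex.I_sq]
      ring
    rw [hprod] at hkey
    have h2 : ((ξ 1 + 1) / d) * ((ξ 2 + 1) / d) = (ξ d ^ 2 + ξ (d + 1) ^ 2) / 4 := by
      exact_mod_cast hkey
    rw [← h2]; ring
  by_cases hmid : ∃ K : ℕ, 3 ≤ K ∧ K ≤ d - 1 ∧ ξ K ≠ -1
  · obtain ⟨K, hK3, hKd, hKne⟩ := hmid
    have hKne' : ξ K + 1 ≠ 0 := fun h => hKne (by linarith)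
    have hξ1 : ξ 1 = -1 := by
      have := keyR K 1 (by omega) (by omega) (by omega) (by omega) (by omega)
        (by omega) (by omega)
      rcases mul_eq_zero.mp this with h | h
      · exact absurd h hKne'
      · linarith
    have hξ2 : ξ 2 = -1 := by
      have := keyR K 2 (by omega) (by omega) (by omega) (by omega) (by omega)
        (by omega) (by omega)
      rcases mul_eq_zero.mp this with h | h
      · exact absurd h hKne'
      · linarith
    have hb0 : ξ d = 0 ∧ ξ (d + 1) = 0 := by
      rw [hξ1, hξ2] at key01
      norm_num at key01
      constructor
      · nlinarith [sq_nonneg (ξ d), sq_nonneg (ξ (d + 1))]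
      · nlinarith [sq_nonneg (ξ d), sq_nonneg (ξ (d + 1))]
    have hothers : ∀ j : ℕ, 3 ≤ j → j ≤ d - 1 → j ≠ K → ξ j = -1 := by
      intro j hj3 hjd hjK
      have := keyR K j (by omega) (by omega) (by omega) (by omega) (by omega)
        (by omega) (by omega)
      rcases mul_eq_zero.mp this with h | h
      · exact absurd h hKne'
      · linarith
    have hall : ∀ j : ℕ, 1 ≤ j → j ≤ d - 1 → j ≠ K → ξ j = -1 := by
      intro j hj1 hjd hjK
      rcases Nat.lt_or_ge j 3 with hj3 | hj3
      · interval_cases j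
        · exact hξ1
        · exact hξ2
      · exact hothers j hj3 hjd hjK
    have hKval : ξ K = (d : ℝ) - 1 := by
      have hl := keyLast K (by omega) (by omega)
      rcases mul_eq_zero.mp hl with h | h
      · exact absurd h hKne'
      · rw [sum_icc_except hd K (by omega) (by omega) hall] at h
        linarith
    exact Or.inr (Or.inl ⟨hξ1, hξ2, hb0.1, hb0.2, K, hK3, hKd, hKval, hothers⟩)
  · push_neg at hmid
    have hmids : ∀ j : ℕ, 3 ≤ j → j ≤ d - 1 → ξ j = -1 := hmid
    by_cases hlast : ∑ k ∈ Finset.Icc 1 (d - 1), ξ k = 1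
    · -- case 3
      have hsum : ξ 1 + ξ 2 = (d : ℝ) - 2 := by
        rw [sum_icc_mid hd hmids] at hlast
        linarith
      refine Or.inr (Or.inr ⟨hsum, hmids, ?_⟩)
      have h1 : (ξ 1 - ξ 2) ^ 2 = (d : ℝ) ^ 2 - 4 * ((ξ 1 + 1) * (ξ 2 + 1)) := by
        nlinarith [hsum]
      have key01' : 4 * ((ξ 1 + 1) * (ξ 2 + 1)) = (ξ d ^ 2 + ξ (d + 1) ^ 2) * (d : ℝ) ^ 2 := by
        have hd2 : (d : ℝ) ^ 2 ≠ 0 := by positivity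
        field_simp at key01
        linarith
      rw [h1]
      field_simp
      linarith
    · -- case 1
      have h1ne : (1 : ℝ) - ∑ k ∈ Finset.Icc 1 (d - 1), ξ k ≠ 0 := by
        intro h; exact hlast (by linarith)
      have hξ1 : ξ 1 = -1 := by
        have := keyLast 1 (by omega) (by omega)
        rcases mul_eq_zero.mp this with h | h
        · linarith
        · exact absurd h h1ne
      have hξ2 : ξ 2 = -1 := by
        have := keyLast 2 (by omega) (by omega)
        rcases mul_eq_zero.mp this with h | h
        · linarith
        · exact absurd h h1ne
      have hb0 : ξ d = 0 ∧ ξ (d + 1) = 0 := by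
        rw [hξ1, hξ2] at key01
        norm_num at key01
        constructor
        · nlinarith [sq_nonneg (ξ d), sq_nonneg (ξ (d + 1))]
        · nlinarith [sq_nonneg (ξ d), sq_nonneg (ξ (d + 1))]
      refine Or.inl ⟨?_, hb0.1, hb0.2⟩
      intro j hj1 hjd
      rcases Nat.lt_or_ge j 3 with hj3 | hj3
      · interval_cases j
        · exact hξ1
        · exact hξ2
      · exact hmids j hj3 hjd

theorem rho_pure_three_cases (d : ℕ) (hd : 3 ≤ d) (ξ : ℕ → ℝ) :
    ((rho d ξ).PosSemidef ∧ (rho d ξ).rank = 1 ↔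
      ((∀ j : ℕ, 1 ≤ j → j ≤ d - 1 → ξ j = -1) ∧ ξ d = 0 ∧ ξ (d + 1) = 0) ∨
      (ξ 1 = -1 ∧ ξ 2 = -1 ∧ ξ d = 0 ∧ ξ (d + 1) = 0 ∧
        ∃ k : ℕ, 3 ≤ k ∧ k ≤ d - 1 ∧ ξ k = (d : ℝ) - 1 ∧
          ∀ j : ℕ, 3 ≤ j → j ≤ d - 1 → j ≠ k → ξ j = -1) ∨
      (ξ 1 + ξ 2 = (d : ℝ) - 2 ∧ (∀ j : ℕ, 3 ≤ j → j ≤ d - 1 → ξ j = -1) ∧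
        (ξ 1 - ξ 2) ^ 2 / (d : ℝ) ^ 2 + ξ d ^ 2 + ξ (d + 1) ^ 2 = 1)) ∧
    ¬(((∀ j : ℕ, 1 ≤ j → j ≤ d - 1 → ξ j = -1) ∧ ξ d = 0 ∧ ξ (d + 1) = 0) ∧
      (ξ 1 = -1 ∧ ξ 2 = -1 ∧ ξ d = 0 ∧ ξ (d + 1) = 0 ∧
        ∃ k : ℕ, 3 ≤ k ∧ k ≤ d - 1 ∧ ξ k = (d : ℝ) - 1 ∧
          ∀ j : ℕ, 3 ≤ j → j ≤ d - 1 → j ≠ k → ξ j = -1)) ∧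
    ¬(((∀ j : ℕ, 1 ≤ j → j ≤ d - 1 → ξ j = -1) ∧ ξ d = 0 ∧ ξ (d + 1) = 0) ∧
      (ξ 1 + ξ 2 = (d : ℝ) - 2 ∧ (∀ j : ℕ, 3 ≤ j → j ≤ d - 1 → ξ j = -1) ∧
        (ξ 1 - ξ 2) ^ 2 / (d : ℝ) ^ 2 + ξ d ^ 2 + ξ (d + 1) ^ 2 = 1)) ∧
    ¬((ξ 1 = -1 ∧ ξ 2 = -1 ∧ ξ d = 0 ∧ ξ (d + 1) = 0 ∧
        ∃ k : ℕ, 3 ≤ k ∧ k ≤ d - 1 ∧ ξ k = (d : ℝ) - 1 ∧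
          ∀ j : ℕ, 3 ≤ j → j ≤ d - 1 → j ≠ k → ξ j = -1) ∧
      (ξ 1 + ξ 2 = (d : ℝ) - 2 ∧ (∀ j : ℕ, 3 ≤ j → j ≤ d - 1 → ξ j = -1) ∧
        (ξ 1 - ξ 2) ^ 2 / (d : ℝ) ^ 2 + ξ d ^ 2 + ξ (d + 1) ^ 2 = 1)) := by
  have hdR : (3 : ℝ) ≤ (d : ℝ) := by exact_mod_cast hd
  refine ⟨⟨fun hpr => rho_forward hd (le_of_eq hpr.2), ?_⟩, ?_, ?_, ?_⟩
  · rintro (⟨h, hb, hb'⟩ | ⟨h1, h2, hb, hb', K, hK3, hKd, hKv, hoth⟩ | ⟨hs, hmids, heq⟩)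
    · rw [case1_eq hd h hb hb']
      refine outer_psd_rank _ ?_
      intro h0
      have := congrFun h0 (⟨d - 1, by omega⟩ : Fin d)
      simp at this
    · rw [case2_eq hd h1 h2 hb hb' K hK3 hKd hKv hoth]
      refine outer_psd_rank _ ?_
      intro h0
      have := congrFun h0 (⟨K - 1, by omega⟩ : Fin d)
      simp at this
    · obtain ⟨v, hv, heqm⟩ := case3_eq hd hs hmids heq
      rw [heqm]
      exact outer_psd_rank _ hv
  · rintro ⟨⟨h1, -, -⟩, ⟨-, -, -, -, K, hK3, hKd, hKv, -⟩⟩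
    have := h1 K (by omega) hKd
    rw [this] at hKv
    linarith
  · rintro ⟨⟨h1, -, -⟩, hs, -, -⟩
    have e1 := h1 1 (by omega) (by omega)
    have e2 := h1 2 (by omega) (by omega)
    rw [e1, e2] at hs
    linarith
  · rintro ⟨⟨e1, e2, -, -, -⟩, hs, -, -⟩
    rw [e1, e2] at hs
    linarith
end
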